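/- arXiv:1503.06517 — 6 statements merged into one kernel-verified Lean document; each statement's English description precedes it below -/
import Mathlib

section
/- For all positive integers m and a with a ≥ 2, the integer m² divides the sum Σ_{k ∈ I(m)} (-1)^{ω(m/k)} · (-1)^{ka} · binom(k(a−1)−1, k−1), where the sum is over all divisors k of m such that m/k is squarefree. -/
open Finset

/-- Number of distinct prime factors of `n`. -/
def omegaN (n : ℕ) : ℕ := n.primeFactors.card

/-- `I(n)`: divisors `k` of `n` such that `n/k` is squarefree. -/
def Iset (n : ℕ) : Finset ℕ := n.divisors.filter (fun k => Squarefree (n / k))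

lemma prod_shift (c : ℕ) : ∀ m : ℕ, (∏ j ∈ Finset.range m, (c + j + 1)) * c.factorial = (c + m).factorial := by
  intro m
  induction m with
  | zero => simp
  | succ k ih =>
    rw [Finset.prod_range_succ, mul_right_comm, ih]
    rw [← Nat.add_assoc, Nat.factorial_succ, Nat.add_right_comm, mul_comm]

lemma choose_prod (n b : ℕ) (hn : 1 ≤ n) :
    Nat.choose (n*b + n - 1) (n-1) * (n-1).factorial = ∏ j ∈ Finset.Ico 1 n, (n*b + j) := by
  have h1 : n*b + n - 1 = n*b + (n-1) := by omega
  have h2 : (n*b + (n-1)) - (n-1) = n*b := by omega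
  have key := Nat.choose_mul_factorial_mul_factorial (n := n*b + (n-1)) (k := n-1) (by omega)
  rw [h2] at key
  have h3 : (∏ j ∈ Finset.range (n-1), (n*b + j + 1)) * (n*b).factorial = (n*b + (n-1)).factorial :=
    prod_shift (n*b) (n-1)
  have h4 : ∏ j ∈ Finset.Ico 1 n, (n*b + j) = ∏ j ∈ Finset.range (n-1), (n*b + j + 1) := by
    rw [Finset.prod_Ico_eq_prod_range]
    apply Finset.prod_congr (by congr 1) (fun x _ => by ring_nf)
  rw [h1, h4]
  exact Nat.eq_of_mul_eq_mul_right (Nat.factorial_pos (n*b)) (by rw [key, h3])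

lemma prod_split (p n₀ : ℕ) (hp : 2 ≤ p) (h0 : 1 ≤ n₀) (g : ℕ → ℕ) :
    ∏ j ∈ Finset.Ico 1 (p * n₀), g j =
      (∏ j ∈ (Finset.Ico 1 (p*n₀)).filter (fun j => ¬ p ∣ j), g j) *
      ∏ i ∈ Finset.Ico 1 n₀, g (p * i) := by
  rw [← Finset.prod_filter_mul_prod_filter_not (Finset.Ico 1 (p*n₀)) (fun j => ¬ p ∣ j) g]
  congr 1
  apply Finset.prod_nbij' (fun j => j / p) (fun i => p * i)
  · intro j hj
    simp only [Finset.mem_filter, Finset.mem_Ico, not_not] at hj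
    obtain ⟨⟨h1, h2⟩, c, rfl⟩ := hj
    rw [Nat.mul_div_cancel_left c (by omega)]
    simp only [Finset.mem_Ico]
    constructor
    · by_contra h; push_neg at h; interval_cases c; omega
    · exact Nat.lt_of_mul_lt_mul_left h2
  · intro i hi
    simp only [Finset.mem_Ico] at hi
    simp only [Finset.mem_filter, Finset.mem_Ico, not_not]
    refine ⟨⟨by nlinarith, by have := hi.2; nlinarith⟩, ⟨i, rfl⟩⟩
  · intro j hj
    simp only [Finset.mem_filter, Finset.mem_Ico, not_not] at hj
    exact Nat.mul_div_cancel' hj.2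
  · intro i _
    exact Nat.mul_div_cancel_left i (by omega)
  · intro j hj
    simp only [Finset.mem_filter, Finset.mem_Ico, not_not] at hj
    rw [Nat.mul_div_cancel' hj.2]

lemma prod_pmul (p n₀ c : ℕ) (h0 : 1 ≤ n₀) :
    ∏ i ∈ Finset.Ico 1 n₀, (p * (c + i)) = p ^ (n₀-1) * ∏ i ∈ Finset.Ico 1 n₀, (c + i) := by
  rw [Finset.prod_mul_distrib, Finset.prod_const, Nat.card_Ico]

lemma star (p n₀ b : ℕ) (hp : 2 ≤ p) (h0 : 1 ≤ n₀) :
    Nat.choose ((p*n₀)*b + (p*n₀) - 1) ((p*n₀)-1) *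
      ∏ j ∈ (Finset.Ico 1 (p*n₀)).filter (fun j => ¬ p ∣ j), j =
    Nat.choose (n₀*b + n₀ - 1) (n₀-1) *
      ∏ j ∈ (Finset.Ico 1 (p*n₀)).filter (fun j => ¬ p ∣ j), ((p*n₀)*b + j) := by
  set n := p * n₀ with hn
  have hn1 : 1 ≤ n := Nat.mul_pos (by omega) h0
  set S := (Finset.Ico 1 n).filter (fun j => ¬ p ∣ j) with hS
  set E := p ^ (n₀ - 1) * (n₀-1).factorial with hE
  have hEpos : 0 < E := by positivity
  apply Nat.eq_of_mul_eq_mul_right hEpos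
  have hfact : (n-1).factorial = (∏ j ∈ S, j) * E := by
    have h1 : (n-1).factorial = ∏ j ∈ Finset.Ico 1 n, j := by
      rw [← Finset.prod_Ico_id_eq_factorial (n-1)]
      have : n - 1 + 1 = n := by omega
      rw [this]
    have h2 := prod_split p n₀ hp h0 id
    simp only [id] at h2
    have h3 : ∏ i ∈ Finset.Ico 1 n₀, (p * i) = p ^ (n₀-1) * (n₀-1).factorial := by
      have := prod_pmul p n₀ 0 h0
      simp only [Nat.zero_add] at this
      rw [this]
      congr 1
      rw [← Finset.prod_Ico_id_eq_factorial (n₀-1)]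
      have : n₀ - 1 + 1 = n₀ := by omega
      rw [this]
    rw [h1, h2, h3]
  have hprodsplit : ∏ j ∈ Finset.Ico 1 n, (n*b + j) =
      (∏ j ∈ S, (n*b + j)) * (p^(n₀-1) * ∏ i ∈ Finset.Ico 1 n₀, (n₀*b + i)) := by
    rw [prod_split p n₀ hp h0 (fun j => n*b + j)]
    congr 1
    have heq : ∀ i ∈ Finset.Ico 1 n₀, n*b + p*i = p * (n₀*b + i) := by
      intro i _; rw [hn]; ring
    rw [Finset.prod_congr rfl heq, prod_pmul p n₀ (n₀*b) h0]
  calc Nat.choose (n*b + n - 1) (n-1) * (∏ j ∈ S, j) * E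
      = Nat.choose (n*b + n - 1) (n-1) * (n-1).factorial := by rw [hfact]; ring
    _ = ∏ j ∈ Finset.Ico 1 n, (n*b + j) := choose_prod n b hn1
    _ = (∏ j ∈ S, (n*b + j)) * (p^(n₀-1) * (Nat.choose (n₀*b + n₀ - 1) (n₀-1) * (n₀-1).factorial)) := by
        rw [hprodsplit, choose_prod n₀ b h0]
    _ = Nat.choose (n₀*b + n₀ - 1) (n₀-1) * (∏ j ∈ S, (n*b + j)) * E := by rw [hE]; ring

section Dagger
variable (p n₀ b v : ℕ)

lemma dagger (hp : p.Prime) (h0 : 1 ≤ n₀) (hv : 1 ≤ v) (hd : p^v ∣ p*n₀) :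
    (∏ j ∈ (Finset.Ico 1 (p*n₀)).filter (fun j => ¬ p ∣ j),
        (((p*n₀)*b + j : ℕ) : ZMod (p^(2*v))))
      = ((-1)^((p*n₀)*(b+2)) * (-1)^(n₀*(b+2))) *
        ∏ j ∈ (Finset.Ico 1 (p*n₀)).filter (fun j => ¬ p ∣ j), ((j : ℕ) : ZMod (p^(2*v))) := by
  have hp2 : 2 ≤ p := hp.two_le
  set n := p * n₀ with hn
  set M := p^(2*v) with hM
  haveI : NeZero M := ⟨by positivity⟩
  set S := (Finset.Ico 1 n).filter (fun j => ¬ p ∣ j) with hS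
  have hmem : ∀ j ∈ S, 1 ≤ j ∧ j < n ∧ ¬ p ∣ j := by
    intro j hj
    simp only [hS, Finset.mem_filter, Finset.mem_Ico] at hj
    exact ⟨hj.1.1, hj.1.2, hj.2⟩
  have hunit : ∀ j ∈ S, IsUnit ((j : ℕ) : ZMod M) := by
    intro j hj
    rw [ZMod.isUnit_iff_coprime]
    exact Nat.Coprime.pow_right _ ((Nat.Prime.coprime_iff_not_dvd hp).mpr (hmem j hj).2.2).symm
  have hpn : p ∣ n := ⟨n₀, rfl⟩
  have hgmem : ∀ j ∈ S, n - j ∈ S := by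
    intro j hj
    obtain ⟨h1, h2, h3⟩ := hmem j hj
    simp only [hS, Finset.mem_filter, Finset.mem_Ico]
    refine ⟨⟨by omega, by omega⟩, fun hdvd => h3 ?_⟩
    have : p ∣ n - (n - j) := (Nat.dvd_sub hpn hdvd)
    rwa [Nat.sub_sub_self (by omega)] at this
  have hn2 : ((n : ZMod M))^2 = 0 := by
    obtain ⟨c, hc⟩ := hd
    have : ((n^2 : ℕ) : ZMod M) = ((M * c^2 : ℕ) : ZMod M) := by
      rw [hn] at hc ⊢ -- ensure
      congr 1
      rw [hc, hM]; ring
    rw [Nat.cast_mul, ZMod.natCast_self, zero_mul] at this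
    rw [← Nat.cast_pow, this]
  set f : ℕ → ZMod M := fun j => ((n*b + j : ℕ) : ZMod M) * (((j : ℕ) : ZMod M))⁻¹ with hf
  have hpair : ∀ j ∈ S, f j * f (n - j) = 1 := by
    intro j hj
    obtain ⟨h1, h2, h3⟩ := hmem j hj
    have hA : ((n*b + j : ℕ) : ZMod M) * ((n*b + (n - j) : ℕ) : ZMod M)
        = ((j : ℕ) : ZMod M) * (((n - j : ℕ)) : ZMod M) := by
      have hsub : ((n - j : ℕ) : ZMod M) = (n : ZMod M) - (j : ZMod M) := by
        push_cast [Nat.cast_sub (by omega : j ≤ n)]; ring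
      push_cast [hsub]
      linear_combination ((b:ZMod M)^2 + b) * hn2
    rw [hf]
    simp only
    calc ((n*b + j : ℕ) : ZMod M) * (((j : ℕ) : ZMod M))⁻¹ *
          (((n*b + (n - j) : ℕ) : ZMod M) * ((((n - j) : ℕ) : ZMod M))⁻¹)
        = (((n*b + j : ℕ) : ZMod M) * ((n*b + (n - j) : ℕ) : ZMod M)) *
          ((((j : ℕ) : ZMod M))⁻¹ * ((((n - j) : ℕ) : ZMod M))⁻¹) := by ring
      _ = (((j : ℕ) : ZMod M) * (((j : ℕ) : ZMod M))⁻¹) *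
          ((((n - j) : ℕ) : ZMod M) * ((((n - j) : ℕ) : ZMod M))⁻¹) := by rw [hA]; ring
      _ = 1 := by
          rw [ZMod.mul_inv_of_unit _ (hunit j hj), ZMod.mul_inv_of_unit _ (hunit _ (hgmem j hj)), one_mul]
  have hprodf : ∏ j ∈ S, f j = ((-1)^(n*(b+2)) * (-1)^(n₀*(b+2)) : ZMod M) := by
    by_cases hcase : p = 2 ∧ n₀ % 2 = 1
    · -- Case B : p = 2, n₀ odd
      obtain ⟨hp2', hodd⟩ := hcase
      have hn2' : n = 2 * n₀ := by rw [hn, hp2']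
      have hv1 : v = 1 := by
        by_contra hne
        have h2v : 2 ≤ v := by omega
        have h4 : (4:ℕ) ∣ 2 * n₀ := by
          have := dvd_trans (pow_dvd_pow p h2v) hd
          rw [hp2'] at this
          norm_num at this
          omega
        omega
      have h40 : ((4 : ℕ) : ZMod M) = 0 := by
        rw [show (4:ℕ) = M from by rw [hM, hp2', hv1]; norm_num]
        exact ZMod.natCast_self M
      have hj₀ : n₀ ∈ S := by
        simp only [hS, Finset.mem_filter, Finset.mem_Ico]
        refine ⟨⟨h0, by omega⟩, ?_⟩
        rw [hp2']; omega
      rw [← Finset.mul_prod_erase S f hj₀]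
      have herase : ∏ j ∈ S.erase n₀, f j = 1 := by
        apply Finset.prod_involution (fun j _ => n - j)
        · intro j hj
          exact hpair j (Finset.mem_of_mem_erase hj)
        · intro j hj _
          have h := hmem j (Finset.mem_of_mem_erase hj)
          have hne := Finset.ne_of_mem_erase hj
          show n - j ≠ j
          omega
        · intro j hj
          apply Finset.mem_erase_of_ne_of_mem
          · have h := hmem j (Finset.mem_of_mem_erase hj)
            have hne := Finset.ne_of_mem_erase hj
            show n - j ≠ n₀
            omega
          · exact hgmem j (Finset.mem_of_mem_erase hj)
        · intro j hj
          have h := hmem j (Finset.mem_of_mem_erase hj)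
          show n - (n - j) = j
          omega
      rw [herase, mul_one]
      have hfn₀ : f n₀ = ((2*b+1 : ℕ) : ZMod M) := by
        have hnum : n*b + n₀ = n₀ * (2*b+1) := by rw [hn2']; ring
        rw [hf]
        simp only
        rw [hnum, Nat.cast_mul, mul_comm ((n₀ : ZMod M)) _, mul_assoc,
          ZMod.mul_inv_of_unit _ (hunit n₀ hj₀), mul_one]
      have hε1 : ((-1 : ZMod M))^(n*(b+2)) = 1 :=
        Even.neg_one_pow (Even.mul_right ⟨n₀, by omega⟩ _)
      have hε2 : ((-1 : ZMod M))^(n₀*(b+2)) = (-1)^(b+2) := by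
        rw [pow_mul]
        congr 1
        exact Odd.neg_one_pow ⟨n₀/2, by omega⟩
      rw [hfn₀, hε1, hε2, one_mul]
      rcases Nat.even_or_odd b with hb | hb
      · obtain ⟨c, rfl⟩ := hb
        have hev : ((-1 : ZMod M))^(c + c + 2) = 1 := Even.neg_one_pow ⟨c+1, by ring⟩
        rw [hev]
        push_cast
        push_cast at h40
        linear_combination (c : ZMod M) * h40
      · obtain ⟨c, rfl⟩ := hb
        have hod : ((-1 : ZMod M))^(2*c + 1 + 2) = -1 := Odd.neg_one_pow ⟨c+1, by ring⟩
        rw [hod]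
        push_cast
        push_cast at h40
        linear_combination (c + 1 : ZMod M) * h40
    · -- Case A
      have hε : ((-1)^(n*(b+2)) * (-1)^(n₀*(b+2)) : ZMod M) = 1 := by
        rw [← pow_add, ← add_mul]
        apply Even.neg_one_pow
        apply Even.mul_right
        rcases eq_or_ne p 2 with h2 | h2
        · have hn₀even : n₀ % 2 = 0 := by
            rcases Nat.even_or_odd n₀ with h | h
            · exact Nat.even_iff.mp h
            · exact absurd ⟨h2, Nat.odd_iff.mp h⟩ hcase
          have hn2' : n = 2 * n₀ := by rw [hn, h2]
          rw [Nat.even_iff]; omega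
        · have hoddp : Odd p := hp.odd_of_ne_two h2
          have hev : Even (n₀ * (p+1)) := (Odd.add_one hoddp).mul_left n₀
          have heq : n + n₀ = n₀ * (p+1) := by rw [hn]; ring
          rwa [heq]
      rw [hε]
      apply Finset.prod_involution (fun j _ => n - j) hpair
      · intro j hj _
        have h := hmem j hj
        intro heq
        have heq' : n - j = j := heq
        have h2j : n = 2 * j := by omega
        rcases eq_or_ne p 2 with h2 | h2
        · have hn₀even : n₀ % 2 = 0 := by
            rcases Nat.even_or_odd n₀ with h' | h'
            · exact Nat.even_iff.mp h'
            · exact absurd ⟨h2, Nat.odd_iff.mp h'⟩ hcase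
          have hn2' : n = 2 * n₀ := by rw [hn, h2]
          apply h.2.2
          rw [h2]
          omega
        · have hpd : p ∣ 2 * j := h2j ▸ hpn
          rcases (Nat.Prime.dvd_mul hp).mp hpd with h' | h'
          · exact h2 ((Nat.prime_dvd_prime_iff_eq hp Nat.prime_two).mp h')
          · exact h.2.2 h'
      · exact hgmem
      · intro j hj
        have h := hmem j hj
        show n - (n - j) = j
        omega
  -- combine
  have hwu : (∏ j ∈ S, (((j : ℕ) : ZMod M))⁻¹) * (∏ j ∈ S, ((j : ℕ) : ZMod M)) = 1 := by
    rw [← Finset.prod_mul_distrib]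
    exact Finset.prod_eq_one (fun j hj => by
      rw [mul_comm]; exact ZMod.mul_inv_of_unit _ (hunit j hj))
  have hft : ∏ j ∈ S, f j
      = (∏ j ∈ S, ((n*b + j : ℕ) : ZMod M)) * ∏ j ∈ S, (((j : ℕ) : ZMod M))⁻¹ :=
    Finset.prod_mul_distrib
  calc ∏ j ∈ S, ((n*b + j : ℕ) : ZMod M)
      = (∏ j ∈ S, ((n*b + j : ℕ) : ZMod M)) *
        ((∏ j ∈ S, (((j : ℕ) : ZMod M))⁻¹) * (∏ j ∈ S, ((j : ℕ) : ZMod M))) := by rw [hwu, mul_one]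
    _ = (∏ j ∈ S, f j) * ∏ j ∈ S, ((j : ℕ) : ZMod M) := by rw [hft]; ring
    _ = ((-1)^(n*(b+2)) * (-1)^(n₀*(b+2))) * ∏ j ∈ S, ((j : ℕ) : ZMod M) := by rw [hprodf]

end Dagger

lemma key_cong (p n₀ a v : ℕ) (hp : p.Prime) (h0 : 1 ≤ n₀) (hv : 1 ≤ v) (ha : 2 ≤ a)
    (hd : p^v ∣ p*n₀) :
    ((p : ℤ))^(2*v) ∣
      ((-1 : ℤ)^((p*n₀)*a) * (Nat.choose ((p*n₀)*(a-1) - 1) ((p*n₀)-1) : ℤ)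
        - (-1 : ℤ)^(n₀*a) * (Nat.choose (n₀*(a-1) - 1) (n₀-1) : ℤ)) := by
  have hp2 : 2 ≤ p := hp.two_le
  set b := a - 2 with hb
  have hab : a = b + 2 := by omega
  set n := p * n₀ with hn
  set M := p^(2*v) with hM
  haveI : NeZero M := ⟨by positivity⟩
  set S := (Finset.Ico 1 n).filter (fun j => ¬ p ∣ j) with hS
  have hunit : ∀ j ∈ S, IsUnit ((j : ℕ) : ZMod M) := by
    intro j hj
    simp only [hS, Finset.mem_filter, Finset.mem_Ico] at hj
    rw [ZMod.isUnit_iff_coprime]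
    exact Nat.Coprime.pow_right _ ((Nat.Prime.coprime_iff_not_dvd hp).mpr hj.2).symm
  -- rewrite choose arguments
  have harg1 : n*(a-1) - 1 = n*b + n - 1 := by
    have : a - 1 = b + 1 := by omega
    rw [this, Nat.mul_add, Nat.mul_one]
  have harg2 : n₀*(a-1) - 1 = n₀*b + n₀ - 1 := by
    have : a - 1 = b + 1 := by omega
    rw [this, Nat.mul_add, Nat.mul_one]
  rw [harg1, harg2, hab]
  -- pass to ZMod M
  rw [show ((p:ℤ))^(2*v) = ((M : ℕ) : ℤ) from by rw [hM]; push_cast; ring]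
  rw [← ZMod.intCast_zmod_eq_zero_iff_dvd]
  push_cast
  -- goal in ZMod M
  have hu : IsUnit (∏ j ∈ S, ((j : ℕ) : ZMod M)) := by
    exact Finset.prod_induction _ IsUnit (fun x y => IsUnit.mul) isUnit_one hunit
  have hstar := star p n₀ b hp2 h0
  have hstarZ : ((Nat.choose (n*b + n - 1) (n-1) : ℕ) : ZMod M) * ∏ j ∈ S, ((j : ℕ) : ZMod M)
      = ((Nat.choose (n₀*b + n₀ - 1) (n₀-1) : ℕ) : ZMod M) * ∏ j ∈ S, ((n*b + j : ℕ) : ZMod M) := by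
    rw [hS, hn]
    have h' := congrArg (fun x : ℕ => (x : ZMod M)) hstar
    simp only [Nat.cast_mul, Nat.cast_prod, Nat.cast_add] at h' ⊢
    exact h'
  have hdagZ : ∏ j ∈ S, ((n*b + j : ℕ) : ZMod M)
      = ((-1)^(n*(b+2)) * (-1)^(n₀*(b+2))) * ∏ j ∈ S, ((j : ℕ) : ZMod M) := by
    rw [hS, hn]
    exact dagger p n₀ b v hp h0 hv hd
  have hC : ((Nat.choose (n*b + n - 1) (n-1) : ℕ) : ZMod M)
      = ((Nat.choose (n₀*b + n₀ - 1) (n₀-1) : ℕ) : ZMod M) *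
        ((-1)^(n*(b+2)) * (-1)^(n₀*(b+2))) := by
    apply hu.mul_right_cancel
    rw [hstarZ, hdagZ]
    ring
  set ε1 : ZMod M := (-1)^(n*(b+2)) with hε1
  set ε2 : ZMod M := (-1)^(n₀*(b+2)) with hε2
  have hdouble : ε1 * ε1 = 1 := by
    rw [hε1, ← pow_add]
    exact Even.neg_one_pow ⟨n*(b+2), rfl⟩
  linear_combination (ε1 : ZMod M) * hC +
    ((Nat.choose (n₀*b + n₀ - 1) (n₀-1) : ℕ) : ZMod M) * ε2 * hdouble

lemma mem_Iset {m k : ℕ} (hm : 0 < m) : k ∈ Iset m ↔ k ∣ m ∧ Squarefree (m / k) := by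
  simp [Iset, Nat.mem_divisors, hm.ne']

lemma prime_dvd_sum (m a p : ℕ) (hm : 0 < m) (ha : 2 ≤ a) (hp : p.Prime) (hpm : p ∣ m) :
    ((p:ℤ))^(2 * m.factorization p) ∣
      ∑ k ∈ Iset m, (-1:ℤ)^(omegaN (m/k)) * (-1)^(k*a) * (Nat.choose (k*(a-1)-1) (k-1) : ℤ) := by
  set T : ℕ → ℤ := fun k => (-1:ℤ)^(omegaN (m/k)) * (-1)^(k*a) * (Nat.choose (k*(a-1)-1) (k-1) : ℤ)
    with hT
  set v := m.factorization p with hv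
  have hv1 : 1 ≤ v := hp.factorization_pos_of_dvd hm.ne' hpm
  rw [← Finset.sum_filter_add_sum_filter_not (Iset m) (fun k => p ∣ m / k) T]
  have hp2 : 2 ≤ p := hp.two_le
  -- facts about P-members
  have hPfacts : ∀ k, k ∈ (Iset m).filter (fun k => p ∣ m / k) →
      k ∣ m ∧ Squarefree (m/k) ∧ p ∣ m/k ∧ 1 ≤ k ∧ k*p ∣ m ∧ m/(k*p) = (m/k)/p ∧
        ¬ p ∣ m/(k*p) ∧ Squarefree (m/(k*p)) := by
    intro k hk
    rw [Finset.mem_filter, mem_Iset hm] at hk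
    obtain ⟨⟨hkm, hsf⟩, hpd⟩ := hk
    have hk1 : 1 ≤ k := Nat.pos_of_dvd_of_pos hkm hm
    have hkpm : k*p ∣ m := by
      conv_rhs => rw [← Nat.mul_div_cancel' hkm]
      exact mul_dvd_mul_left k hpd
    have hdd : m/(k*p) = (m/k)/p := (Nat.div_div_eq_div_mul m k p).symm
    have hsf2 : Squarefree ((m/k)/p) :=
      Squarefree.squarefree_of_dvd (Nat.div_dvd_of_dvd hpd) hsf
    have hnot : ¬ p ∣ (m/k)/p := by
      intro hcon
      have : p * p ∣ m/k := by
        conv_rhs => rw [← Nat.mul_div_cancel' hpd]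
        exact mul_dvd_mul_left p hcon
      exact hp.not_isUnit (hsf p this)
    exact ⟨hkm, hsf, hpd, hk1, hkpm, hdd, by rw [hdd]; exact hnot, by rw [hdd]; exact hsf2⟩
  have hQfacts : ∀ k, k ∈ (Iset m).filter (fun k => ¬ p ∣ m / k) →
      k ∣ m ∧ Squarefree (m/k) ∧ ¬ p ∣ m/k ∧ p ∣ k ∧ 1 ≤ k/p ∧ m/(k/p) = p*(m/k) := by
    intro k hk
    rw [Finset.mem_filter, mem_Iset hm] at hk
    obtain ⟨⟨hkm, hsf⟩, hpd⟩ := hk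
    have hk1 : 1 ≤ k := Nat.pos_of_dvd_of_pos hkm hm
    have hpk : p ∣ k := by
      have hpm' : p ∣ k * (m/k) := by rw [Nat.mul_div_cancel' hkm]; exact hpm
      rcases hp.dvd_mul.mp hpm' with h | h
      · exact h
      · exact absurd h hpd
    have hkp1 : 1 ≤ k/p := Nat.div_pos (Nat.le_of_dvd hk1 hpk) (by omega)
    have hmkp : m/(k/p) = p*(m/k) := by
      have hm' : m = (k/p) * (p*(m/k)) := by
        rw [← mul_assoc, Nat.div_mul_cancel hpk, Nat.mul_div_cancel' hkm]
      conv_lhs => rw [hm']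
      exact Nat.mul_div_cancel_left _ hkp1
    exact ⟨hkm, hsf, hpd, hpk, hkp1, hmkp⟩
  have hbij : ∑ k ∈ (Iset m).filter (fun k => ¬ p ∣ m / k), T k
      = ∑ k ∈ (Iset m).filter (fun k => p ∣ m / k), T (k*p) := by
    apply Finset.sum_nbij' (fun k => k / p) (fun k => k * p)
    · intro k hk
      obtain ⟨hkm, hsf, hpd, hpk, hkp1, hmkp⟩ := hQfacts k hk
      rw [Finset.mem_filter, mem_Iset hm]
      refine ⟨⟨dvd_trans (Nat.div_dvd_of_dvd hpk) hkm, ?_⟩, ?_⟩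
      · rw [hmkp]
        exact (Nat.squarefree_mul ((hp.coprime_iff_not_dvd).mpr hpd)).mpr ⟨hp.squarefree, hsf⟩
      · rw [hmkp]; exact dvd_mul_right p (m/k)
    · intro k hk
      obtain ⟨hkm, hsf, hpd, hk1, hkpm, hdd, hnot, hsf2⟩ := hPfacts k hk
      rw [Finset.mem_filter, mem_Iset hm]
      exact ⟨⟨hkpm, hsf2⟩, hnot⟩
    · intro k hk
      obtain ⟨_, _, _, hpk, _, _⟩ := hQfacts k hk
      exact Nat.div_mul_cancel hpk
    · intro k hk
      exact Nat.mul_div_cancel _ (by omega)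
    · intro k hk
      obtain ⟨_, _, _, hpk, _, _⟩ := hQfacts k hk
      rw [Nat.div_mul_cancel hpk]
  rw [hbij, ← Finset.sum_add_distrib]
  apply Finset.dvd_sum
  intro k hk
  obtain ⟨hkm, hsf, hpd, hk1, hkpm, hdd, hnot, hsf2⟩ := hPfacts k hk
  -- omega relation
  have hmk0 : m/k ≠ 0 := (Nat.div_pos (Nat.le_of_dvd hm hkm) hk1).ne'
  have ht0 : m/(k*p) ≠ 0 := by
    rw [hdd]
    have h1 : p ≤ m/k := Nat.le_of_dvd (Nat.pos_of_ne_zero hmk0) hpd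
    exact (Nat.div_pos h1 (by omega : 0 < p)).ne'
  have hmkfact : m/k = p * (m/(k*p)) := by
    rw [hdd, Nat.mul_div_cancel' hpd]
  have homega : omegaN (m/k) = omegaN (m/(k*p)) + 1 := by
    rw [hmkfact]
    unfold omegaN
    rw [Nat.primeFactors_mul (by omega : p ≠ 0) ht0, hp.primeFactors, ← Finset.insert_eq,
      Finset.card_insert_of_notMem (fun hmem => hnot (Nat.dvd_of_mem_primeFactors hmem))]
  have hfk : v ≤ k.factorization p + 1 := by
    have hmeq : m = k * (m/k) := (Nat.mul_div_cancel' hkm).symm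
    have heq : m.factorization p = k.factorization p + (m/k).factorization p := by
      conv_lhs => rw [hmeq]
      rw [Nat.factorization_mul (by omega) hmk0]
      simp [Finsupp.add_apply]
    have hle1 : (m/k).factorization p ≤ 1 := hsf.natFactorization_le_one p
    omega
  have hdvd : p^v ∣ p * k := by
    have h1 : p^(v-1) ∣ k :=
      dvd_trans (pow_dvd_pow p (by omega : v - 1 ≤ k.factorization p)) (Nat.ordProj_dvd k p)
    rw [show v = (v-1)+1 by omega, pow_succ']
    exact mul_dvd_mul_left p h1
  have hkey := key_cong p k a v hp hk1 hv1 ha hdvd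
  have hTsum : T k + T (k*p) = (-1)^(omegaN (m/(k*p))) *
      ((-1:ℤ)^((p*k)*a) * (Nat.choose ((p*k)*(a-1) - 1) ((p*k)-1) : ℤ)
        - (-1:ℤ)^(k*a) * (Nat.choose (k*(a-1) - 1) (k-1) : ℤ)) := by
    simp only [hT]
    rw [homega, mul_comm k p]
    ring
  rw [hTsum]
  exact Dvd.dvd.mul_left hkey _

theorem sq_dvd_sum (m a : ℕ) (hm : 0 < m) (ha : 2 ≤ a) :
    ((m : ℤ)) ^ 2 ∣
      ∑ k ∈ Iset m,
        (-1 : ℤ) ^ (omegaN (m / k)) * (-1 : ℤ) ^ (k * a) *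
          (Nat.choose (k * (a - 1) - 1) (k - 1) : ℤ) := by
  set S : ℤ := ∑ k ∈ Iset m,
      (-1 : ℤ) ^ (omegaN (m / k)) * (-1 : ℤ) ^ (k * a) *
        (Nat.choose (k * (a - 1) - 1) (k - 1) : ℤ) with hSdef
  by_cases hS0 : S = 0
  · rw [hS0]; exact dvd_zero _
  have habs : m^2 ∣ S.natAbs := by
    rw [← Nat.factorization_le_iff_dvd (by positivity) (Int.natAbs_ne_zero.mpr hS0)]
    rw [Finsupp.le_def]
    intro q
    by_cases hq : q.Prime
    · by_cases hqm : q ∣ m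
      · have hdvd := prime_dvd_sum m a q hm ha hq hqm
        have hdvd' : q^(2 * m.factorization q) ∣ S.natAbs := by
          apply Int.natCast_dvd_natCast.mp
          apply Int.dvd_natAbs.mpr
          push_cast
          exact hdvd
        have hle := (hq.pow_dvd_iff_le_factorization (Int.natAbs_ne_zero.mpr hS0)).mp hdvd'
        rw [Nat.factorization_pow]
        simpa using hle
      · rw [Nat.factorization_pow]
        simp [Nat.factorization_eq_zero_of_not_dvd hqm]
    · simp [Nat.factorization_eq_zero_of_not_prime _ hq]
  have : ((m^2 : ℕ) : ℤ) ∣ S := Int.dvd_natAbs.mp (Int.natCast_dvd_natCast.mpr habs)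
  push_cast at this
  exact this
end

section
/- For every integer w ≥ 2 and all positive integers s, t with t dividing s, the matrix entry C_{st} is an integer; that is, (s/t)² divides Σ_{k ∈ I(s/t)} (-1)^{ω(s/(kt))} · (-1)^{ktw} · binom(k(tw−1)−1, k−1) in ℤ. -/
open Finset

/-- The matrix entry `C_{st}` (depending on `w`). -/
noncomputable def Cmat (w s t : ℕ) : ℚ :=
  if t ∣ s then
    ((-1 : ℚ) ^ (s * w) / ((s / t : ℕ) : ℚ) ^ 2) *
      ∑ k ∈ Iset (s / t),
        (-1 : ℚ) ^ (omegaN (s / (k * t))) * (-1 : ℚ) ^ (k * t * w) *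
          (Nat.choose (k * (t * w - 1) - 1) (k - 1) : ℚ)
  else 0


lemma reindexP {M : Type*} [CommMonoid M] (p K : ℕ) (hp : 0 < p) (f : ℕ → M) :
    ∏ i ∈ (Ico 1 (K*p)).filter (fun i => p ∣ i), f i = ∏ j ∈ Ico 1 K, f (p*j) := by
  refine Finset.prod_nbij' (fun x => x / p) (fun j => p * j) ?_ ?_ ?_ ?_ ?_
  · intro a ha
    simp only [mem_filter, mem_Ico] at ha ⊢
    obtain ⟨⟨h1, h2⟩, j, rfl⟩ := ha
    rw [Nat.mul_div_cancel_left _ hp]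
    constructor <;> nlinarith
  · intro j hj
    simp only [mem_filter, mem_Ico] at hj ⊢
    refine ⟨⟨by nlinarith [hj.1], by nlinarith [hj.2]⟩, ⟨j, rfl⟩⟩
  · intro a ha
    simp only [mem_filter, mem_Ico] at ha
    exact Nat.mul_div_cancel' ha.2
  · intro j _
    exact Nat.mul_div_cancel_left j hp
  · intro a ha
    simp only [mem_filter, mem_Ico] at ha
    rw [Nat.mul_div_cancel' ha.2]

lemma identXY (p N m : ℕ) (hp : 1 < p) (hN : 0 < N) (hm : 1 ≤ m) :
    Nat.choose (m*N*p - 1) (N*p - 1) * ∏ i ∈ (Ico 1 (N*p)).filter (fun i => ¬ p ∣ i), i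
      = Nat.choose (m*N - 1) (N - 1) *
          ∏ i ∈ (Ico 1 (N*p)).filter (fun i => ¬ p ∣ i), (m*N*p - i) := by
  have hp0 : 0 < p := by omega
  have hNp : 1 ≤ N * p := Nat.one_le_iff_ne_zero.mpr (by positivity)
  have hdesc : ∀ (c K : ℕ), 1 ≤ K → ∏ i ∈ Ico 1 K, (c - i) = (c - 1).descFactorial (K - 1) := by
    intro c K hK
    rw [Nat.descFactorial_eq_prod_range, Finset.prod_Ico_eq_prod_range]
    apply Finset.prod_congr rfl
    intro i _
    omega
  have hsplit : ∀ (f : ℕ → ℕ), ∏ i ∈ Ico 1 (N*p), f i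
      = (∏ i ∈ (Ico 1 (N*p)).filter (fun i => ¬ p ∣ i), f i) * ∏ j ∈ Ico 1 N, f (p*j) := by
    intro f
    rw [← reindexP p N hp0 f, ← Finset.prod_filter_mul_prod_filter_not (Ico 1 (N*p)) (fun i => p ∣ i) f]
    ring
  have hcard : (Ico 1 N).card = N - 1 := by simp
  have e1 : (m*N*p - 1).descFactorial (N*p - 1)
      = (∏ i ∈ (Ico 1 (N*p)).filter (fun i => ¬ p ∣ i), (m*N*p - i))
          * (p^(N-1) * (m*N - 1).descFactorial (N-1)) := by
    rw [← hdesc (m*N*p) (N*p) hNp, hsplit]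
    congr 1
    rw [← hdesc (m*N) N hN]
    have : ∀ j ∈ Ico 1 N, m*N*p - p*j = p * (m*N - j) := by
      intro j hj
      rw [Nat.mul_sub]
      ring_nf
    rw [Finset.prod_congr rfl this, Finset.prod_mul_distrib, Finset.prod_const, hcard]
  have e2 : (N*p - 1).factorial
      = (∏ i ∈ (Ico 1 (N*p)).filter (fun i => ¬ p ∣ i), i) * (p^(N-1) * (N-1).factorial) := by
    have h1 : ∏ i ∈ Ico 1 (N*p), i = (N*p - 1).factorial := by
      have := Finset.prod_Ico_id_eq_factorial (N*p - 1)
      rwa [show N*p - 1 + 1 = N*p by omega] at this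
    have h2 : ∏ j ∈ Ico 1 N, j = (N-1).factorial := by
      have := Finset.prod_Ico_id_eq_factorial (N - 1)
      rwa [show N - 1 + 1 = N by omega] at this
    rw [← h1, hsplit, Finset.prod_mul_distrib, Finset.prod_const, hcard, ← h2]
    try ring
  have key : (Nat.choose (m*N*p - 1) (N*p - 1) * ∏ i ∈ (Ico 1 (N*p)).filter (fun i => ¬ p ∣ i), i)
        * (p^(N-1) * (N-1).factorial)
      = (Nat.choose (m*N - 1) (N - 1) * ∏ i ∈ (Ico 1 (N*p)).filter (fun i => ¬ p ∣ i), (m*N*p - i))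
        * (p^(N-1) * (N-1).factorial) := by
    have d1 : (m*N*p - 1).descFactorial (N*p - 1) = (N*p-1).factorial * Nat.choose (m*N*p - 1) (N*p - 1) :=
      Nat.descFactorial_eq_factorial_mul_choose _ _
    have d2 : (m*N - 1).descFactorial (N - 1) = (N-1).factorial * Nat.choose (m*N - 1) (N - 1) :=
      Nat.descFactorial_eq_factorial_mul_choose _ _
    calc (Nat.choose (m*N*p - 1) (N*p - 1) * ∏ i ∈ (Ico 1 (N*p)).filter (fun i => ¬ p ∣ i), i)
            * (p^(N-1) * (N-1).factorial)
        = (N*p - 1).factorial * Nat.choose (m*N*p - 1) (N*p - 1) := by rw [e2]; ring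
      _ = (m*N*p - 1).descFactorial (N*p - 1) := d1.symm
      _ = (∏ i ∈ (Ico 1 (N*p)).filter (fun i => ¬ p ∣ i), (m*N*p - i))
            * (p^(N-1) * ((N-1).factorial * Nat.choose (m*N - 1) (N - 1))) := by rw [e1, d2]
      _ = _ := by ring
  exact Nat.eq_of_mul_eq_mul_right (by positivity) key

lemma keyCong (p N m : ℕ) (hp : p.Prime) (hN : 0 < N) (hm : 1 ≤ m) :
    ((p:ℤ))^(2*(N.factorization p + 1)) ∣
      (-1:ℤ)^(p*N*(m+1)) * (Nat.choose (m*N*p - 1) (N*p - 1) : ℤ)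
        - (-1:ℤ)^(N*(m+1)) * (Nat.choose (m*N - 1) (N - 1) : ℤ) := by
  set a := N.factorization p + 1 with ha
  set M := p ^ (2*a) with hMdef
  set S := (Ico 1 (N*p)).filter (fun i => ¬ p ∣ i) with hS
  set ε : ℤ := (-1)^(N*(m+1)*(p-1)) with hε
  set X := Nat.choose (m*N*p - 1) (N*p - 1) with hX
  set Y := Nat.choose (m*N - 1) (N - 1) with hY
  set A := ∏ i ∈ S, (m*N*p - i) with hA
  set B := ∏ i ∈ S, i with hB
  have hp0 : 0 < p := hp.pos
  have hp1 : 1 < p := hp.one_lt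
  have hpN : p ^ a ∣ N * p := by
    rw [ha, pow_succ]
    exact mul_dvd_mul (Nat.ordProj_dvd N p) dvd_rfl
  have hMNp2 : (M : ℤ) ∣ ((N*p : ℕ) : ℤ)^2 := by
    rw [hMdef]
    have h1 : ((p^a : ℕ) : ℤ) ∣ ((N*p : ℕ) : ℤ) := Int.natCast_dvd_natCast.mpr hpN
    push_cast at h1 ⊢
    rw [two_mul, pow_add, sq]
    exact mul_dvd_mul h1 h1
  -- membership facts
  have hmemS : ∀ i, i ∈ S ↔ (1 ≤ i ∧ i < N*p ∧ ¬ p ∣ i) := by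
    intro i; rw [hS]; simp [mem_filter, mem_Ico, and_assoc]
  have hflip : ∀ i ∈ S, N*p - i ∈ S := by
    intro i hi
    rw [hmemS] at hi ⊢
    obtain ⟨h1, h2, h3⟩ := hi
    refine ⟨by omega, by omega, fun hdvd => h3 ?_⟩
    have : p ∣ N*p - (N*p - i) := Nat.dvd_sub (Dvd.intro_left N rfl) hdvd
    rwa [Nat.sub_sub_self (by omega)] at this
  -- units
  have hunit : ∀ i : ℕ, ¬ p ∣ i → IsUnit ((i : ZMod M)) := by
    intro i hi
    rw [ZMod.isUnit_iff_coprime]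
    exact Nat.Coprime.pow_right _ (((hp.coprime_iff_not_dvd).mpr hi).symm)
  have hFmul : ∀ i ∈ S, (((m*N*p - i : ℕ) : ZMod M) * ((i : ZMod M))⁻¹) * (i : ZMod M)
      = ((m*N*p - i : ℕ) : ZMod M) := by
    intro i hi
    rw [hmemS] at hi
    rw [mul_assoc, ZMod.inv_mul_of_unit _ (hunit i hi.2.2), mul_one]
  have hpair : ∀ i ∈ S, (((m*N*p - i : ℕ) : ZMod M) * ((i : ZMod M))⁻¹)
      * (((m*N*p - (N*p - i) : ℕ) : ZMod M) * (((N*p - i : ℕ) : ZMod M))⁻¹) = 1 := by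
    intro i hi
    have hji := hflip i hi
    rw [hmemS] at hi hji
    set j := N*p - i with hj
    have hij : i + j = N*p := by omega
    have hiM : i ≤ m*N*p := by nlinarith [hi.2.1]
    have hjM : j ≤ m*N*p := by nlinarith [hji.2.1]
    have hd : (M:ℤ) ∣ (((m*N*p - i : ℕ) * (m*N*p - j : ℕ) : ℕ) : ℤ) - ((i*j : ℕ) : ℤ) := by
      have : (((m*N*p - i : ℕ) * (m*N*p - j : ℕ) : ℕ) : ℤ) - ((i*j : ℕ) : ℤ)
          = ((N*p:ℕ):ℤ)^2 * (m^2 - m) := by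
        push_cast [Nat.cast_sub hiM, Nat.cast_sub hjM]
        have : (i:ℤ) + j = (N:ℤ)*p := by exact_mod_cast congrArg (Nat.cast : ℕ → ℤ) hij
        nlinarith [this]
      rw [this]
      exact Dvd.dvd.mul_right hMNp2 _
    have hxy : ((m*N*p - i : ℕ) : ZMod M) * ((m*N*p - j : ℕ) : ZMod M)
        = (i : ZMod M) * (j : ZMod M) := by
      have h0 := (ZMod.intCast_zmod_eq_zero_iff_dvd _ M).mpr hd
      push_cast at h0
      linear_combination h0
    calc (((m*N*p - i : ℕ) : ZMod M) * ((i : ZMod M))⁻¹)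
          * (((m*N*p - j : ℕ) : ZMod M) * (((j : ℕ) : ZMod M))⁻¹)
        = (((m*N*p - i : ℕ) : ZMod M) * ((m*N*p - j : ℕ) : ZMod M))
            * (((i : ZMod M))⁻¹ * (((j : ℕ) : ZMod M))⁻¹) := by ring
      _ = ((i : ZMod M) * ((i : ZMod M))⁻¹) * ((j : ZMod M) * (((j : ℕ) : ZMod M))⁻¹) := by
            rw [hxy]; ring
      _ = 1 := by
            rw [ZMod.mul_inv_of_unit _ (hunit i hi.2.2), ZMod.mul_inv_of_unit _ (hunit j hji.2.2),
              one_mul]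
  have hProd : ∏ i ∈ S, (((m*N*p - i : ℕ) : ZMod M) * ((i : ZMod M))⁻¹) = ((ε : ℤ) : ZMod M) := by
    by_cases hc : p = 2 ∧ ¬ 2 ∣ N
    · obtain ⟨hp2, hN2⟩ := hc
      subst hp2
      have ha1 : a = 1 := by rw [ha, Nat.factorization_eq_zero_of_not_dvd hN2]
      have hM4 : M = 4 := by rw [hMdef, ha1]; norm_num
      have hNS : N ∈ S := by
        rw [hmemS]
        exact ⟨hN, by nlinarith, hN2⟩
      rw [← Finset.mul_prod_erase S _ hNS]
      have herase : ∏ i ∈ S.erase N, (((m*N*2 - i : ℕ) : ZMod M) * ((i : ZMod M))⁻¹) = 1 := by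
        apply Finset.prod_involution (fun i _ => N*2 - i)
        · intro i hi
          exact hpair i (Finset.mem_of_mem_erase hi)
        · intro i hi _
          have hi' := Finset.mem_of_mem_erase hi
          have hiN := Finset.ne_of_mem_erase hi
          rw [hmemS] at hi'
          omega
        · intro i hi
          have hi' := Finset.mem_of_mem_erase hi
          have hiN := Finset.ne_of_mem_erase hi
          rw [Finset.mem_erase]
          refine ⟨?_, hflip i hi'⟩
          rw [hmemS] at hi'
          omega
        · intro i hi
          have hi' := Finset.mem_of_mem_erase hi
          rw [hmemS] at hi'
          omega
      rw [herase, mul_one]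
      -- F N = ε
      have hsub : m*N*2 - N = N * (2*m - 1) := by
        rw [Nat.mul_sub, Nat.mul_one, show N*(2*m) = m*N*2 from by ring]
      have hcast : ((m*N*2 - N : ℕ) : ZMod M) = ((N:ℕ) : ZMod M) * (((2*m - 1 : ℕ)) : ZMod M) := by
        rw [hsub]
        push_cast
        ring
      have hNunit := hunit N hN2
      have hev : (((2*m - 1 : ℕ)) : ZMod M) = ((ε : ℤ) : ZMod M) := by
        have hdvd : (M:ℤ) ∣ ((2*m - 1 : ℕ) : ℤ) - ε := by
          rw [hM4]
          rcases Nat.even_or_odd m with hme | hmo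
          · obtain ⟨k, hk⟩ := hme
            have hεv : ε = -1 := by
              rw [hε]
              apply Odd.neg_one_pow
              have hNodd : Odd N := Nat.odd_iff.mpr (by omega)
              have hmm : Odd (m+1) := by rw [Nat.odd_iff]; omega
              simpa using hNodd.mul hmm
            rw [hεv]
            omega
          · obtain ⟨k, hk⟩ := hmo
            have hεv : ε = 1 := by
              rw [hε]
              apply Even.neg_one_pow
              have hmm : Even (m+1) := by rw [Nat.even_iff]; omega
              simpa using hmm.mul_left N
            rw [hεv]
            omega
        have := (ZMod.intCast_zmod_eq_zero_iff_dvd _ M).mpr hdvd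
        push_cast at this
        linear_combination this
      rw [hcast, hev]
      rw [mul_comm ((N:ℕ) : ZMod M) _, mul_assoc, ZMod.mul_inv_of_unit _ hNunit, mul_one]
    · have hεval : ε = 1 := by
        rw [hε]
        apply Even.neg_one_pow
        rcases eq_or_ne p 2 with h2 | h2
        · subst h2
          have h2N : 2 ∣ N := by tauto
          have : Even N := (even_iff_two_dvd).mpr h2N
          exact (this.mul_right (m+1)).mul_right (2-1)
        · have hodd : Odd p := hp.odd_of_ne_two h2
          have : Even (p - 1) := Nat.Odd.sub_odd hodd odd_one
          exact this.mul_left _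
      rw [hεval]
      rw [Int.cast_one]
      apply Finset.prod_involution (fun i _ => N*p - i)
      · intro i hi
        exact hpair i hi
      · intro i hi _
        rw [hmemS] at hi
        intro heq
        have h2i : 2*i = N*p := by omega
        rcases eq_or_ne p 2 with h2 | h2
        · subst h2
          have h2N : 2 ∣ N := by tauto
          have : i = N := by omega
          exact hi.2.2 (this ▸ h2N)
        · have : p ∣ 2 * i := h2i ▸ Dvd.intro_left N rfl
          rcases (Nat.Prime.dvd_mul hp).mp this with h | h
          · have := Nat.le_of_dvd (by norm_num) h
            omega
          · exact hi.2.2 h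
      · exact hflip
      · intro i hi
        rw [hmemS] at hi
        omega
  have h1 : (M:ℤ) ∣ (A:ℤ) - ε * (B:ℤ) := by
    rw [← ZMod.intCast_zmod_eq_zero_iff_dvd]
    push_cast
    rw [sub_eq_zero]
    rw [hA, hB]
    push_cast
    calc ∏ i ∈ S, ((m*N*p - i : ℕ) : ZMod M)
        = ∏ i ∈ S, ((((m*N*p - i : ℕ) : ZMod M) * ((i : ZMod M))⁻¹) * (i : ZMod M)) :=
          Finset.prod_congr rfl (fun i hi => (hFmul i hi).symm)
      _ = (∏ i ∈ S, (((m*N*p - i : ℕ) : ZMod M) * ((i : ZMod M))⁻¹)) * ∏ i ∈ S, (i : ZMod M) :=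
          Finset.prod_mul_distrib
      _ = ((ε:ℤ) : ZMod M) * ∏ i ∈ S, (i : ZMod M) := by rw [hProd]
  have hid : (X:ℤ) * B = (Y:ℤ) * A := by
    exact_mod_cast congrArg (fun x : ℕ => (x : ℤ)) (identXY p N m hp1 hN hm)
  have h2 : (M:ℤ) ∣ ((X:ℤ) - ε * Y) * B := by
    have heq : ((X:ℤ) - ε*Y) * B = (Y:ℤ) * ((A:ℤ) - ε*B) := by linear_combination hid
    rw [heq]
    exact h1.mul_left _
  have hcopB : Nat.Coprime p B := by
    rw [hp.coprime_iff_not_dvd]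
    intro hdvd
    rw [hB] at hdvd
    obtain ⟨i, hi, hpi⟩ := (hp.prime.dvd_finset_prod_iff _).mp hdvd
    rw [hmemS] at hi
    exact hi.2.2 hpi
  have hcop : IsCoprime ((M:ℕ):ℤ) ((B:ℕ):ℤ) := by
    rw [hMdef]
    push_cast
    exact IsCoprime.pow_left (Nat.isCoprime_iff_coprime.mpr hcopB)
  have h3 : (M:ℤ) ∣ (X:ℤ) - ε*Y := hcop.dvd_of_dvd_mul_right h2
  have h4 : ((p:ℤ))^(2*a) ∣ (X:ℤ) - ε*Y := by
    have hMc : ((M:ℕ):ℤ) = (p:ℤ)^(2*a) := by rw [hMdef]; push_cast; ring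
    rwa [hMc] at h3
  have hsign : (-1:ℤ)^(N*(m+1)) = (-1:ℤ)^(p*N*(m+1)) * ε := by
    have hexp : p*N*(m+1) + N*(m+1)*(p-1) = (2*(p-1)+1) * (N*(m+1)) := by
      obtain ⟨p', rfl⟩ : ∃ p', p = p' + 1 := ⟨p-1, by omega⟩
      rw [Nat.add_sub_cancel]
      ring
    rw [hε, ← pow_add, hexp]
    rcases Nat.even_or_odd (N*(m+1)) with he | ho
    · rw [he.neg_one_pow, (he.mul_left _).neg_one_pow]
    · rw [ho.neg_one_pow, (Odd.mul ⟨p-1, rfl⟩ ho).neg_one_pow]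
  have hfin : (-1:ℤ)^(p*N*(m+1)) * (X:ℤ) - (-1:ℤ)^(N*(m+1)) * (Y:ℤ)
      = (-1:ℤ)^(p*N*(m+1)) * ((X:ℤ) - ε*Y) := by
    rw [hsign]; ring
  rw [hfin]
  exact h4.mul_left _
lemma keyCong' (p N m : ℕ) (hp : p.Prime) (hN : 0 < N) (hm : 1 ≤ m) :
    ((p:ℤ))^(2*(N.factorization p + 1)) ∣
      (-1:ℤ)^((p*N)*(m+1)) * (Nat.choose ((p*N)*m - 1) (p*N - 1) : ℤ)
        - (-1:ℤ)^(N*(m+1)) * (Nat.choose (N*m - 1) (N - 1) : ℤ) := by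
  have := keyCong p N m hp hN hm
  rw [show m*N*p = (p*N)*m from by ring, show N*p = p*N from mul_comm N p,
    show m*N = N*m from mul_comm m N] at this
  exact this


lemma divisor_step (n p : ℕ) (hn : 0 < n) (hp : p.Prime) (hpn : p ∣ n) (g : ℕ → ℤ)
    (hg : ∀ N, 0 < N → ((p:ℤ))^(2*(N.factorization p + 1)) ∣ g (p*N) - g N) :
    ((p:ℤ))^(2 * n.factorization p) ∣
      ∑ d ∈ n.divisors.filter Squarefree, (-1:ℤ)^(omegaN d) * g (n/d) := by
  set D := n.divisors.filter Squarefree with hD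
  have hmemD : ∀ d, d ∈ D ↔ (d ∣ n ∧ Squarefree d) := by
    intro d
    rw [hD, Finset.mem_filter, Nat.mem_divisors]
    constructor
    · rintro ⟨⟨h1, _⟩, h2⟩; exact ⟨h1, h2⟩
    · rintro ⟨h1, h2⟩; exact ⟨⟨h1, hn.ne'⟩, h2⟩
  have hsplit : ∑ d ∈ D, (-1:ℤ)^(omegaN d) * g (n/d)
      = ∑ d ∈ D.filter (fun d => ¬ p ∣ d), ((-1:ℤ)^(omegaN d) * g (n/d))
        + ∑ d ∈ D.filter (fun d => p ∣ d), ((-1:ℤ)^(omegaN d) * g (n/d)) := by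
    rw [add_comm]
    exact (Finset.sum_filter_add_sum_filter_not D (fun d => p ∣ d) _).symm
  have hbij : ∑ d ∈ D.filter (fun d => p ∣ d), ((-1:ℤ)^(omegaN d) * g (n/d))
      = ∑ e ∈ D.filter (fun d => ¬ p ∣ d), ((-1:ℤ)^(omegaN (p*e)) * g (n/(p*e))) := by
    apply Finset.sum_nbij' (fun d => d / p) (fun e => p * e)
    · intro d hd
      rw [Finset.mem_filter] at hd ⊢
      obtain ⟨hd1, e, rfl⟩ := hd
      rw [hmemD] at hd1 ⊢
      rw [Nat.mul_div_cancel_left _ hp.pos]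
      refine ⟨⟨dvd_trans ⟨p, mul_comm p e⟩ hd1.1, hd1.2.squarefree_of_dvd ⟨p, mul_comm p e⟩⟩, ?_⟩
      intro hpe
      have : IsUnit p := hd1.2 p (mul_dvd_mul_left p hpe)
      exact hp.one_lt.ne' (Nat.isUnit_iff.mp this)
    · intro e he
      rw [Finset.mem_filter] at he ⊢
      obtain ⟨he1, he2⟩ := he
      rw [hmemD] at he1 ⊢
      have hcop : Nat.Coprime p e := (hp.coprime_iff_not_dvd).mpr he2
      refine ⟨⟨hcop.mul_dvd_of_dvd_of_dvd hpn he1.1,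
        (Nat.squarefree_mul hcop).mpr ⟨hp.squarefree, he1.2⟩⟩, Dvd.intro e rfl⟩
    · intro d hd
      rw [Finset.mem_filter] at hd
      exact Nat.mul_div_cancel' hd.2
    · intro e _
      exact Nat.mul_div_cancel_left _ hp.pos
    · intro d hd
      rw [Finset.mem_filter] at hd
      rw [Nat.mul_div_cancel' hd.2]
  rw [hsplit, hbij, ← Finset.sum_add_distrib]
  apply Finset.dvd_sum
  intro e he
  rw [Finset.mem_filter] at he
  obtain ⟨he1, he2⟩ := he
  rw [hmemD] at he1
  obtain ⟨hedvd, hesq⟩ := he1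
  have he0 : e ≠ 0 := by
    rintro rfl
    exact hn.ne' (Nat.eq_zero_of_zero_dvd hedvd)
  have hpe0 : p * e ≠ 0 := Nat.mul_ne_zero hp.pos.ne' he0
  have hpen : p * e ∣ n := ((hp.coprime_iff_not_dvd).mpr he2).mul_dvd_of_dvd_of_dvd hpn hedvd
  obtain ⟨q, hq⟩ := hpen
  have hq0 : 0 < q := by
    rcases Nat.eq_zero_or_pos q with h | h
    · rw [h, mul_zero] at hq; omega
    · exact h
  have hnpe : n / (p * e) = q := by rw [hq, Nat.mul_div_cancel_left _ (Nat.pos_of_ne_zero hpe0)]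
  have hne' : n / e = p * q := by
    rw [show n = e * (p * q) from by rw [hq]; ring, Nat.mul_div_cancel_left _ (Nat.pos_of_ne_zero he0)]
  have homega : omegaN (p * e) = omegaN e + 1 := by
    unfold omegaN
    rw [Nat.primeFactors_mul hp.pos.ne' he0, hp.primeFactors]
    rw [show ({p} ∪ e.primeFactors : Finset ℕ) = insert p e.primeFactors from rfl,
      Finset.card_insert_of_notMem]
    intro hmem
    exact he2 (Nat.dvd_of_mem_primeFactors hmem)
  have hfq : n.factorization p = q.factorization p + 1 := by
    have : n = p * (e * q) := by rw [hq]; ring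
    rw [this, Nat.factorization_mul hp.pos.ne' (by positivity),
      Nat.factorization_mul he0 hq0.ne']
    simp only [Finsupp.coe_add, Pi.add_apply]
    rw [hp.factorization_self, Nat.factorization_eq_zero_of_not_dvd he2]
    ring
  have hterm : (-1:ℤ)^(omegaN e) * g (n/e) + (-1:ℤ)^(omegaN (p*e)) * g (n/(p*e))
      = (-1:ℤ)^(omegaN e) * (g (p*q) - g q) := by
    rw [homega, hne', hnpe, pow_succ]
    ring
  rw [hterm]
  have := hg q hq0
  rw [← hfq] at this
  exact this.mul_left _


lemma L1 (n : ℕ) (hn : 0 < n) (g : ℕ → ℤ)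
    (hg : ∀ p : ℕ, p.Prime → ∀ N : ℕ, 0 < N → ((p:ℤ))^(2*(N.factorization p + 1)) ∣ g (p*N) - g N) :
    ((n:ℤ))^2 ∣ ∑ k ∈ Iset n, (-1:ℤ)^(omegaN (n/k)) * g k := by
  have hre : ∑ k ∈ Iset n, (-1:ℤ)^(omegaN (n/k)) * g k
      = ∑ d ∈ n.divisors.filter Squarefree, (-1:ℤ)^(omegaN d) * g (n/d) := by
    apply Finset.sum_nbij' (fun k => n/k) (fun d => n/d)
    · intro k hk
      rw [Iset, Finset.mem_filter, Nat.mem_divisors] at hk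
      rw [Finset.mem_filter, Nat.mem_divisors]
      exact ⟨⟨Nat.div_dvd_of_dvd hk.1.1, hn.ne'⟩, hk.2⟩
    · intro d hd
      rw [Finset.mem_filter, Nat.mem_divisors] at hd
      rw [Iset, Finset.mem_filter, Nat.mem_divisors]
      refine ⟨⟨Nat.div_dvd_of_dvd hd.1.1, hn.ne'⟩, ?_⟩
      rw [Nat.div_div_self hd.1.1 hn.ne']
      exact hd.2
    · intro k hk
      rw [Iset, Finset.mem_filter, Nat.mem_divisors] at hk
      exact Nat.div_div_self hk.1.1 hn.ne'
    · intro d hd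
      rw [Finset.mem_filter, Nat.mem_divisors] at hd
      exact Nat.div_div_self hd.1.1 hn.ne'
    · intro k hk
      rw [Iset, Finset.mem_filter, Nat.mem_divisors] at hk
      rw [Nat.div_div_self hk.1.1 hn.ne']
  rw [hre]
  have h0 := Nat.factorization_prod_pow_eq_self hn.ne'
  rw [Finsupp.prod, Nat.support_factorization] at h0
  have hfact : ((n:ℤ))^2 = ∏ p ∈ n.primeFactors, ((p:ℤ))^(2 * n.factorization p) := by
    conv_lhs => rw [← h0]
    push_cast
    rw [← Finset.prod_pow]
    apply Finset.prod_congr rfl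
    intro p _
    rw [← pow_mul, mul_comm]
  rw [hfact]
  apply Finset.prod_dvd_of_coprime
  · intro p hp q hq hne
    simp only [Function.onFun]
    apply IsCoprime.pow
    exact Nat.Coprime.isCoprime ((Nat.coprime_primes (Nat.prime_of_mem_primeFactors hp)
      (Nat.prime_of_mem_primeFactors (by exact hq))).mpr hne)
  · intro p hp
    exact divisor_step n p hn (Nat.prime_of_mem_primeFactors hp)
      (Nat.dvd_of_mem_primeFactors hp) g (hg p (Nat.prime_of_mem_primeFactors hp))

theorem Cmat_entry_integral (w : ℕ) (hw : 2 ≤ w) (s t : ℕ) (hs : 0 < s) (ht : 0 < t)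
    (hts : t ∣ s) :
    (((s / t : ℕ) : ℤ)) ^ 2 ∣
      ∑ k ∈ Iset (s / t),
        (-1 : ℤ) ^ (omegaN (s / (k * t))) * (-1 : ℤ) ^ (k * t * w) *
          (Nat.choose (k * (t * w - 1) - 1) (k - 1) : ℤ) := by
  set n := s / t with hn
  have hn0 : 0 < n := Nat.div_pos (Nat.le_of_dvd hs hts) ht
  have hst : n * t = s := Nat.div_mul_cancel hts
  have htw : 2 ≤ t * w := by nlinarith
  set m := t * w - 1 with hm
  have hm1 : 1 ≤ m := by omega
  have hmw : m + 1 = t * w := by omega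
  set g : ℕ → ℤ := fun k => (-1 : ℤ) ^ (k * (m+1)) * (Nat.choose (k * m - 1) (k - 1) : ℤ) with hg
  have hsum : ∑ k ∈ Iset n,
        (-1 : ℤ) ^ (omegaN (s / (k * t))) * (-1 : ℤ) ^ (k * t * w) *
          (Nat.choose (k * (t * w - 1) - 1) (k - 1) : ℤ)
      = ∑ k ∈ Iset n, (-1:ℤ)^(omegaN (n/k)) * g k := by
    apply Finset.sum_congr rfl
    intro k hk
    rw [Iset, Finset.mem_filter, Nat.mem_divisors] at hk
    have hdv : s / (k * t) = n / k := by
      rw [← hst, Nat.mul_div_mul_right _ _ ht]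
    rw [hdv, hg]
    simp only [← hm, hmw]
    rw [show k * (t * w) = k * t * w from by ring]
    ring
  rw [hsum]
  apply L1 n hn0 g
  intro p hp N hN
  simp only [hg]
  exact keyCong' p N m hp hN hm1
end

section
/- Let p be a prime, e ≥ 1 an integer, and a ≥ 2 an integer. Then (-1)^{p^e · a} · binom(p^e(a−1)−1, p^e−1) ≡ (-1)^{p^{e−1} · a} · binom(p^{e−1}(a−1)−1, p^{e−1}−1) modulo p^{2e}. -/
open Finset

lemma prodG (n : ℕ) : ∀ k : ℕ, (n + k).choose k * k.factorial = ∏ i ∈ Finset.Ico 1 (k+1), (n + i) := by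
  intro k
  induction k with
  | zero => simp
  | succ k ih =>
    rw [Finset.prod_Ico_succ_top (by omega), ← ih, Nat.factorial_succ]
    have h := Nat.add_one_mul_choose_eq (n+k) k
    have e1 : n + (k+1) = n + k + 1 := by omega
    rw [e1]
    calc (n+k+1).choose (k+1) * ((k+1) * k.factorial)
        = ((n+k+1).choose (k+1) * (k+1)) * k.factorial := by ring
      _ = ((n+k+1) * (n+k).choose k) * k.factorial := by rw [← h]
      _ = (n+k).choose k * k.factorial * (n+k+1) := by ring

lemma splitprod (p m : ℕ) (hp : 0 < p) (f : ℕ → ℕ) :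
    ∏ i ∈ Finset.Ico 1 (p*m), f i =
      (∏ j ∈ Finset.Ico 1 m, f (p*j)) *
        ∏ i ∈ (Finset.Ico 1 (p*m)).filter (fun i => ¬ p ∣ i), f i := by
  rw [← Finset.prod_filter_mul_prod_filter_not (Finset.Ico 1 (p*m)) (fun i => p ∣ i)]
  congr 1
  rw [← Finset.prod_image (g := fun j => p * j)
    (by intro x _ y _ h; exact Nat.eq_of_mul_eq_mul_left hp h)]
  congr 1
  ext i
  simp only [Finset.mem_image, Finset.mem_filter, Finset.mem_Ico]
  constructor
  · rintro ⟨⟨h1, h2⟩, j, rfl⟩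
    refine ⟨j, ⟨?_, ?_⟩, rfl⟩
    · rcases Nat.eq_zero_or_pos j with rfl | h
      · omega
      · exact h
    · exact Nat.lt_of_mul_lt_mul_left h2
  · rintro ⟨j, ⟨hj1, hj2⟩, rfl⟩
    refine ⟨⟨?_, ?_⟩, dvd_mul_right p j⟩
    · have := Nat.mul_le_mul hp hj1; omega
    · exact Nat.mul_lt_mul_of_le_of_lt (le_refl p) hj2 hp

lemma prod_add_sq_zero {R : Type*} [CommRing R] (d : R) (hd : d * d = 0)
    (F : Finset ℕ) (f : ℕ → R) :
    ∏ i ∈ F, (d + f i) = ∏ i ∈ F, f i + d * ∑ i ∈ F, ∏ j ∈ F.erase i, f j := by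
  classical
  induction F using Finset.induction_on with
  | empty => simp
  | @insert a F ha ih =>
    rw [Finset.prod_insert ha, ih, Finset.prod_insert ha, Finset.sum_insert ha,
        Finset.erase_insert ha]
    have h2 : ∀ i ∈ F, ∏ j ∈ (insert a F).erase i, f j = f a * ∏ j ∈ F.erase i, f j := by
      intro i hi
      rw [Finset.erase_insert_of_ne (by rintro rfl; exact ha hi),
        Finset.prod_insert (fun h => ha (Finset.mem_of_mem_erase h))]
    rw [Finset.sum_congr rfl h2, ← Finset.mul_sum]
    calc (d + f a) * (∏ i ∈ F, f i + d * ∑ i ∈ F, ∏ j ∈ F.erase i, f j)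
        = f a * ∏ i ∈ F, f i
            + d * (∏ i ∈ F, f i + f a * ∑ i ∈ F, ∏ j ∈ F.erase i, f j)
            + (d * d) * ∑ i ∈ F, ∏ j ∈ F.erase i, f j := by ring
      _ = f a * ∏ i ∈ F, f i
            + d * (∏ i ∈ F, f i + f a * ∑ i ∈ F, ∏ j ∈ F.erase i, f j) := by
          rw [hd]; ring

lemma sum_erase_dvd (p : ℕ) (hp : p.Prime) (e : ℕ) (he : 1 ≤ e) (h2 : p = 2 → 2 ≤ e) :
    p^e ∣ ∑ i ∈ (Finset.Ico 1 (p^e)).filter (fun i => ¬ p ∣ i),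
            ∏ j ∈ ((Finset.Ico 1 (p^e)).filter (fun i => ¬ p ∣ i)).erase i, j := by
  set K := p^e with hK
  have hK1 : 1 < K := Nat.one_lt_pow (by omega) hp.one_lt
  haveI : NeZero K := ⟨by omega⟩
  rw [← ZMod.natCast_eq_zero_iff]
  push_cast
  set F := (Finset.Ico 1 K).filter (fun i => ¬ p ∣ i) with hF
  have hmem : ∀ i, i ∈ F ↔ (1 ≤ i ∧ i < K ∧ ¬ p ∣ i) := by
    intro i; simp [hF, Finset.mem_filter, Finset.mem_Ico, and_assoc]
  have hpK : p ∣ K := dvd_pow_self p (by omega)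
  have hgmem : ∀ i, i ∈ F → K - i ∈ F := by
    intro i hi
    obtain ⟨h1, h2', h3⟩ := (hmem i).mp hi
    refine (hmem _).mpr ⟨by omega, by omega, ?_⟩
    intro hdvd
    have : p ∣ i := by
      have := Nat.dvd_sub hpK hdvd
      rwa [Nat.sub_sub_self (by omega)] at this
    exact h3 this
  refine Finset.sum_involution (fun i _ => K - i) ?_ ?_ hgmem ?_
  · intro i hi
    obtain ⟨h1, h2', h3⟩ := (hmem i).mp hi
    have hu : IsUnit ((i : ZMod K)) := by
      rw [ZMod.isUnit_iff_coprime]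
      exact Nat.Coprime.pow_right e ((hp.coprime_iff_not_dvd.mpr h3).symm)
    apply hu.mul_left_cancel
    have hKi : K - i ∈ F := hgmem i hi
    have hcast : ((K - i : ℕ) : ZMod K) = -(i : ZMod K) := by
      rw [Nat.cast_sub (by omega)]
      simp
    calc (i : ZMod K) * (∏ j ∈ F.erase i, (j : ZMod K)
            + ∏ j ∈ F.erase (K - i), (j : ZMod K))
        = (i : ZMod K) * ∏ j ∈ F.erase i, (j : ZMod K)
            - ((K - i : ℕ) : ZMod K) * ∏ j ∈ F.erase (K - i), (j : ZMod K) := by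
          rw [hcast]; ring
      _ = (∏ j ∈ F, (j : ZMod K)) - (∏ j ∈ F, (j : ZMod K)) := by
          rw [Finset.mul_prod_erase F _ hi, Finset.mul_prod_erase F _ hKi]
      _ = (i : ZMod K) * 0 := by ring
  · intro i hi _
    obtain ⟨h1, h2', h3⟩ := (hmem i).mp hi
    show ¬ (K - i = i)
    intro heq
    have hKeq : K = 2 * i := by omega
    have hev : Even K := ⟨i, by omega⟩
    have hp2 : p = 2 := by
      have := (Nat.even_pow.mp (hK ▸ hev)).1
      exact (hp.even_iff).mp this
    have he2 : 2 ≤ e := h2 hp2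
    have : i = 2 ^ (e-1) := by
      have hKe : K = 2 * 2 ^ (e-1) := by
        rw [hK, hp2, ← pow_succ']
        congr 1; omega
      omega
    exact h3 (by rw [hp2, this]; exact dvd_pow_self 2 (by omega))
  · intro i hi
    obtain ⟨h1, h2', h3⟩ := (hmem i).mp hi
    show K - (K - i) = i
    omega

theorem main_nat (p : ℕ) (hp : p.Prime) (e : ℕ) (he : 1 ≤ e) (h2 : p = 2 → 2 ≤ e)
    (b : ℕ) (hb : 1 ≤ b) :
    Nat.choose (p^e * b - 1) (p^e - 1) ≡ Nat.choose (p^(e-1) * b - 1) (p^(e-1) - 1)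
      [MOD p^(2*e)] := by
  set K := p^e with hK
  set m := p^(e-1) with hm
  have hm1 : 1 ≤ m := Nat.one_le_pow _ _ hp.pos
  have hK1 : 1 < K := Nat.one_lt_pow (by omega) hp.one_lt
  have hKm : K = p * m := by
    rw [hK, hm, ← pow_succ']
    congr 1; omega
  obtain ⟨c, rfl⟩ : ∃ c, b = c + 1 := ⟨b - 1, by omega⟩
  set F := (Finset.Ico 1 K).filter (fun i => ¬ p ∣ i) with hF
  set P := ∏ i ∈ F, i with hP
  set Q := ∏ i ∈ F, (K*c + i) with hQ
  have e1 : K*(c+1) - 1 = K*c + (K-1) := by rw [Nat.mul_succ]; omega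
  have e2 : m*(c+1) - 1 = m*c + (m-1) := by rw [Nat.mul_succ]; omega
  -- prodG instances
  have g1 : (K*c + (K-1)).choose (K-1) * (K-1).factorial = ∏ i ∈ Finset.Ico 1 K, (K*c + i) := by
    have h := prodG (K*c) (K-1)
    rwa [Nat.sub_add_cancel (by omega)] at h
  have g2 : (m*c + (m-1)).choose (m-1) * (m-1).factorial = ∏ i ∈ Finset.Ico 1 m, (m*c + i) := by
    have h := prodG (m*c) (m-1)
    rwa [Nat.sub_add_cancel (by omega)] at h
  have g3 : (K-1).factorial = ∏ i ∈ Finset.Ico 1 K, i := by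
    have h := prodG 0 (K-1)
    simpa [Nat.sub_add_cancel (show 1 ≤ K by omega)] using h
  have g4 : (m-1).factorial = ∏ i ∈ Finset.Ico 1 m, i := by
    have h := prodG 0 (m-1)
    simpa [Nat.sub_add_cancel (show 1 ≤ m by omega)] using h
  -- splits
  have s1 : ∏ i ∈ Finset.Ico 1 K, (K*c + i)
      = p^(m-1) * ((m*c + (m-1)).choose (m-1) * (m-1).factorial) * Q := by
    have h := splitprod p m hp.pos (fun i => K*c + i)
    rw [← hKm] at h
    rw [h]
    have hj : ∀ j ∈ Finset.Ico 1 m, K*c + p*j = p*(m*c+j) := by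
      intro j _; rw [hKm]; ring
    rw [Finset.prod_congr rfl hj, Finset.prod_mul_distrib, Finset.prod_const, Nat.card_Ico,
      g2, ← hQ]
  have s2 : ∏ i ∈ Finset.Ico 1 K, i = p^(m-1) * (m-1).factorial * P := by
    have h := splitprod p m hp.pos (fun i => i)
    rw [← hKm] at h
    rw [h, Finset.prod_mul_distrib, Finset.prod_const, Nat.card_Ico, ← g4, ← hP]
  have hfactK : (K-1).factorial = p^(m-1) * (m-1).factorial * P := g3.trans s2
  -- Identity A
  have hA : (K*c + (K-1)).choose (K-1) * P = (m*c + (m-1)).choose (m-1) * Q := by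
    have hD : 0 < p^(m-1) * (m-1).factorial := Nat.mul_pos (pow_pos hp.pos _) (Nat.factorial_pos _)
    apply Nat.eq_of_mul_eq_mul_left hD
    calc p^(m-1) * (m-1).factorial * ((K*c + (K-1)).choose (K-1) * P)
        = (K*c + (K-1)).choose (K-1) * (p^(m-1) * (m-1).factorial * P) := by ring
      _ = (K*c + (K-1)).choose (K-1) * (K-1).factorial := by rw [← hfactK]
      _ = p^(m-1) * ((m*c + (m-1)).choose (m-1) * (m-1).factorial) * Q := g1.trans s1
      _ = p^(m-1) * (m-1).factorial * ((m*c + (m-1)).choose (m-1) * Q) := by ring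
  -- modular part
  have h2e : p^(2*e) = K^2 := by rw [hK, ← pow_mul]; congr 1; ring
  rw [e1, e2, h2e, ← ZMod.natCast_eq_natCast_iff]
  haveI : NeZero (K^2) := ⟨by positivity⟩
  have hK20 : ((K^2 : ℕ) : ZMod (K^2)) = 0 := ZMod.natCast_self _
  have hQP : ((Q : ℕ) : ZMod (K^2)) = ((P : ℕ) : ZMod (K^2)) := by
    obtain ⟨t, ht⟩ := sum_erase_dvd p hp e he h2
    rw [← hK] at ht
    have hcastQ : ((Q : ℕ) : ZMod (K^2)) = ∏ i ∈ F, (((K*c : ℕ) : ZMod (K^2)) + (i : ZMod (K^2))) := by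
      rw [hQ]; push_cast; ring_nf
    have hd : (((K*c : ℕ) : ZMod (K^2))) * (((K*c : ℕ) : ZMod (K^2))) = 0 := by
      have : ((K*c : ℕ) : ZMod (K^2)) * ((K*c : ℕ) : ZMod (K^2)) = ((K^2 : ℕ) : ZMod (K^2)) * ((c*c : ℕ) : ZMod (K^2)) := by
        push_cast; ring
      rw [this, hK20, zero_mul]
    rw [hcastQ, prod_add_sq_zero _ hd]
    have hsum : (∑ i ∈ F, ∏ j ∈ F.erase i, (j : ZMod (K^2)))
        = ((∑ i ∈ F, ∏ j ∈ F.erase i, j : ℕ) : ZMod (K^2)) := by push_cast; rfl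
    rw [hsum, ← hF] at *
    rw [ht]
    have : ((K*c : ℕ) : ZMod (K^2)) * ((K * t : ℕ) : ZMod (K^2))
        = ((K^2 : ℕ) : ZMod (K^2)) * ((c*t : ℕ) : ZMod (K^2)) := by push_cast; ring
    rw [this, hK20, zero_mul, add_zero]
    rw [hP]; push_cast; rfl
  have hPunit : IsUnit ((P : ℕ) : ZMod (K^2)) := by
    rw [ZMod.isUnit_iff_coprime]
    have hcop : Nat.Coprime P p := by
      apply Nat.Coprime.prod_left
      intro i hi
      have h3 : ¬ p ∣ i := (Finset.mem_filter.mp hi).2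
      exact (hp.coprime_iff_not_dvd.mpr h3).symm
    have hKe : K^2 = p^(e*2) := by rw [hK, ← pow_mul]
    rw [hKe]
    exact hcop.pow_right _
  have hcastA : ((K*c + (K-1)).choose (K-1) : ZMod (K^2)) * ((P : ℕ) : ZMod (K^2))
      = ((m*c + (m-1)).choose (m-1) : ZMod (K^2)) * ((Q : ℕ) : ZMod (K^2)) := by
    exact_mod_cast congrArg (fun n : ℕ => (n : ZMod (K^2))) hA
  rw [hQP] at hcastA
  exact hPunit.mul_left_cancel (by rw [mul_comm _ ((K*c + (K-1)).choose (K-1) : ZMod (K^2)), hcastA, mul_comm])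

theorem prime_power_congruence (p : ℕ) (hp : p.Prime) (e : ℕ) (he : 1 ≤ e)
    (a : ℕ) (ha : 2 ≤ a) :
    ((-1 : ℤ) ^ (p ^ e * a) * (Nat.choose (p ^ e * (a - 1) - 1) (p ^ e - 1) : ℤ)) ≡
      ((-1 : ℤ) ^ (p ^ (e - 1) * a) *
        (Nat.choose (p ^ (e - 1) * (a - 1) - 1) (p ^ (e - 1) - 1) : ℤ))
      [ZMOD ((p : ℤ) ^ (2 * e))] := by
  by_cases hcase : p = 2 ∧ e = 1
  · obtain ⟨rfl, rfl⟩ := hcase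
    norm_num [Nat.choose_one_right]
    have h2 : (2 * (a - 1) - 1 : ℕ) = 2 * a - 3 := by omega
    rw [h2]
    have h3 : ((2 * a - 3 : ℕ) : ℤ) = 2 * (a : ℤ) - 3 := by
      have h4 : (3:ℕ) ≤ 2 * a := by omega
      push_cast [h4]; ring
    rw [h3]
    rcases Nat.even_or_odd a with hpar | hpar
    · rw [hpar.neg_one_pow, Int.ModEq]
      obtain ⟨t, rfl⟩ := hpar
      push_cast
      omega
    · rw [hpar.neg_one_pow, Int.ModEq]
      obtain ⟨t, rfl⟩ := hpar
      push_cast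
      omega
  · have h2 : p = 2 → 2 ≤ e := by
      intro hp2
      rcases Nat.lt_or_ge e 2 with h | h
      · exact absurd ⟨hp2, by omega⟩ hcase
      · exact h
    have hmain := main_nat p hp e he h2 (a-1) (by omega)
    have hsign : (-1 : ℤ) ^ (p ^ e * a) = (-1 : ℤ) ^ (p ^ (e-1) * a) := by
      by_cases hp2 : p = 2
      · subst hp2
        have he2 := h2 rfl
        rw [(Nat.even_pow.mpr ⟨even_two, by omega⟩).mul_right a |>.neg_one_pow,
          (Nat.even_pow.mpr ⟨even_two, by omega⟩).mul_right a |>.neg_one_pow]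
      · have hodd : Odd p := hp.odd_of_ne_two hp2
        rw [pow_mul, pow_mul, (hodd.pow).neg_one_pow, (hodd.pow).neg_one_pow]
    rw [hsign]
    apply Int.ModEq.mul_left
    have hcast : ((p:ℤ)^(2*e)) = ((p^(2*e) : ℕ) : ℤ) := by push_cast; ring
    rw [hcast, Int.natCast_modEq_iff]
    exact hmain
end

section
/- For every integer w ≥ 2 and every positive integer N, the N×N matrix over ℚ with entries C_{st} for 1 ≤ s, t ≤ N is invertible, and every entry of its inverse is an integer. -/
/-!
Put `m = s / t` and `n = t w`. The sum over `I(m)` defining `C_{st}` is the Möbius sum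
`∑_{d ∣ m} μ(d) a_n(m / d)` with `a_n(k) = (-1)^{kn} binom(k(n-1)-1, k-1)`, and `m²` divides it
because of the Jacobsthal-type congruence `a_n(pk) ≡ a_n(k) mod p^{2 v_p(pk)}`. To prove the
latter, split `∏_{0<i<pk} (pk(N-1) + i) = (pk-1)! binom(pkN-1, pk-1)` into the factors with `p ∣ i`
and the rest: this gives `binom(pkN-1, pk-1) ∏ i = binom(kN-1, k-1) ∏ (pk(N-1) + i)` over the
`i < pk` prime to `p`, and pairing `i` with `pk - i` shows that the two products agree modulo
`p^{2 v_p(pk)}` (for `p = 2` and odd `k` the pairing fixes `k`, which costs a sign modulo `4`).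
So `C` is an integer lower unitriangular matrix, and its inverse is its integer adjugate.
-/

open Finset

open scoped Nat

theorem Finset.prod_eq_prod_of_involution {α M : Type*} [DecidableEq α] [CommMonoid M]
    (s : Finset α) (σ : α → α) (hmem : ∀ i ∈ s, σ i ∈ s) (hinv : ∀ i ∈ s, σ (σ i) = i)
    (hne : ∀ i ∈ s, σ i ≠ i) {f g : α → M} (h : ∀ i ∈ s, f i * f (σ i) = g i * g (σ i)) :
    ∏ i ∈ s, f i = ∏ i ∈ s, g i := by
  induction s using Finset.strongInduction with
  | H s ih =>
  obtain rfl | ⟨i, hi⟩ := s.eq_empty_or_nonempty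
  · simp
  have hσi : σ i ∈ s.erase i := mem_erase.2 ⟨hne i hi, hmem i hi⟩
  set t := (s.erase i).erase (σ i)
  have split (F : α → M) : ∏ j ∈ s, F j = F i * F (σ i) * ∏ j ∈ t, F j := by
    rw [mul_assoc, mul_prod_erase _ _ hσi, mul_prod_erase _ _ hi]
  have mem_t {j} : j ∈ t ↔ j ≠ σ i ∧ j ≠ i ∧ j ∈ s := by simp [t]
  have ht : t ⊂ s := (erase_ssubset hσi).trans (erase_ssubset hi)
  rw [split f, split g, h i hi]
  congr 1
  refine ih t ht (fun j hj => ?_) (fun j hj => hinv j (ht.subset hj))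
    (fun j hj => hne j (ht.subset hj)) (fun j hj => h j (ht.subset hj))
  obtain ⟨hj₁, hj₂, hj⟩ := mem_t.1 hj
  refine mem_t.2 ⟨fun e => hj₂ ?_, fun e => hj₁ ?_, hmem j hj⟩
  · rw [← hinv j hj, e, hinv i hi]
  · rw [← hinv j hj, e]

theorem prod_Ico_one_add (c m : ℕ) : ∏ i ∈ Ico 1 (m + 1), (c + i) = m ! * (c + m).choose m := by
  rw [← Nat.ascFactorial_eq_factorial_mul_choose, Nat.ascFactorial_eq_prod_range,
    prod_Ico_eq_prod_range, Nat.add_sub_cancel]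
  exact prod_congr rfl fun i _ => by ring

def nonMultiples (p n : ℕ) : Finset ℕ := (Ico 1 n).filter (fun i => ¬ p ∣ i)

theorem prod_Ico_one_mul_split {p : ℕ} (hp : 0 < p) (k : ℕ) (f : ℕ → ℕ) :
    ∏ i ∈ Ico 1 (p * k), f i = (∏ i ∈ nonMultiples p (p * k), f i) * ∏ j ∈ Ico 1 k, f (p * j) := by
  have hmul : (Ico 1 (p * k)).filter (p ∣ ·) = (Ico 1 k).image (p * ·) := by
    ext i
    simp only [mem_filter, mem_Ico, mem_image]
    constructor
    · rintro ⟨⟨h1, h2⟩, j, rfl⟩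
      exact ⟨j, ⟨Nat.pos_of_mul_pos_left h1, lt_of_mul_lt_mul_left h2 (Nat.zero_le p)⟩, rfl⟩
    · rintro ⟨j, ⟨h1, h2⟩, rfl⟩
      exact ⟨⟨Nat.mul_pos hp h1, Nat.mul_lt_mul_of_pos_left h2 hp⟩, j, rfl⟩
  rw [← prod_filter_not_mul_prod_filter _ (p ∣ ·), hmul,
    prod_image fun a _ b _ h => Nat.eq_of_mul_eq_mul_left hp h]
  rfl

theorem prod_Ico_one_mul_add_split {p k : ℕ} (hp : 0 < p) (hk : 0 < k) (c : ℕ) :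
    ∏ i ∈ Ico 1 (p * k), (p * c + i) =
      (∏ i ∈ nonMultiples p (p * k), (p * c + i)) *
        (p ^ (k - 1) * ((k - 1)! * (c + (k - 1)).choose (k - 1))) := by
  rw [prod_Ico_one_mul_split hp, ← prod_Ico_one_add, Nat.sub_add_cancel hk]
  congr 1
  simp only [← mul_add, prod_mul_distrib, prod_const, Nat.card_Ico]

theorem choose_mul_prod_nonMultiples {p k N : ℕ} (hp : 0 < p) (hk : 0 < k) (hN : 0 < N) :
    (p * k * N - 1).choose (p * k - 1) * ∏ i ∈ nonMultiples p (p * k), i =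
      (k * N - 1).choose (k - 1) * ∏ i ∈ nonMultiples p (p * k), (p * (k * (N - 1)) + i) := by
  have hfac (c : ℕ) : ∏ i ∈ Ico 1 (p * k), (p * c + i) =
      (p * k - 1)! * (p * c + (p * k - 1)).choose (p * k - 1) := by
    rw [← prod_Ico_one_add, Nat.sub_add_cancel (Nat.mul_pos hp hk)]
  have h₀ := (hfac 0).symm.trans (prod_Ico_one_mul_add_split hp hk 0)
  have h₁ := (hfac (k * (N - 1))).symm.trans (prod_Ico_one_mul_add_split hp hk (k * (N - 1)))
  simp only [mul_zero, zero_add, Nat.choose_self, mul_one] at h₀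
  obtain ⟨N, rfl⟩ : ∃ M, N = M + 1 := ⟨N - 1, by omega⟩
  have e₁ : p * k * (N + 1) - 1 = p * (k * N) + (p * k - 1) := by
    have := Nat.mul_pos hp hk; ring_nf; omega
  have e₂ : k * (N + 1) - 1 = k * N + (k - 1) := by ring_nf; omega
  rw [Nat.add_sub_cancel] at h₁ ⊢
  rw [e₁, e₂]
  have hpos : 0 < p ^ (k - 1) * (k - 1)! := Nat.mul_pos (Nat.pow_pos hp) (Nat.factorial_pos _)
  refine Nat.eq_of_mul_eq_mul_right hpos ?_
  calc _ = (p * k - 1)! * (p * (k * N) + (p * k - 1)).choose (p * k - 1) := by rw [h₀]; ring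
    _ = _ := by rw [h₁]; ring

theorem sub_mem_nonMultiples {p n i : ℕ} (hi : i ∈ nonMultiples p n) (hpn : p ∣ n) :
    n - i ∈ nonMultiples p n := by
  simp only [nonMultiples, mem_filter, mem_Ico] at hi ⊢
  refine ⟨by omega, fun h => hi.2 ?_⟩
  simpa [Nat.sub_sub_self (by omega : i ≤ n)] using Nat.dvd_sub hpn h

theorem isUnit_of_mem_nonMultiples {p n i : ℕ} (hp : p.Prime) (hi : i ∈ nonMultiples p n)
    (b : ℕ) : IsUnit (i : ZMod (p ^ b)) :=
  (ZMod.isUnit_iff_coprime _ _).2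
    (Nat.Coprime.pow_right _ (Nat.coprime_comm.1 (hp.coprime_iff_not_dvd.2 (mem_filter.1 hi).2)))

theorem sub_ne_self_of_mem_nonMultiples {p k i : ℕ} (hp : p.Prime) (hpk : p ≠ 2 ∨ 2 ∣ k)
    (hi : i ∈ nonMultiples p (p * k)) : p * k - i ≠ i := by
  obtain ⟨hlt, hndvd⟩ := mem_filter.1 hi
  rw [mem_Ico] at hlt
  intro h
  have h2 : p * k = 2 * i := by omega
  apply hndvd
  rcases hpk with hp2 | ⟨j, rfl⟩
  · exact (Nat.Coprime.dvd_mul_left ((Nat.coprime_primes hp Nat.prime_two).2 hp2)).1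
      (h2 ▸ dvd_mul_right p k)
  · exact ⟨j, by linarith⟩

theorem prod_add_eq_prod_of_reflect {d n x : ℕ} (hn : d ∣ n) (hx : d ∣ x) (s : Finset ℕ)
    (hs : ∀ i ∈ s, i ≤ n ∧ n - i ∈ s ∧ n - i ≠ i) :
    ∏ i ∈ s, ((x + i : ℕ) : ZMod (d ^ 2)) = ∏ i ∈ s, (i : ZMod (d ^ 2)) := by
  refine prod_eq_prod_of_involution s (n - ·) (fun i hi => (hs i hi).2.1)
    (fun i hi => Nat.sub_sub_self (hs i hi).1) (fun i hi => (hs i hi).2.2) fun i hi => ?_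
  have hsq : ((x * (x + n) : ℕ) : ZMod (d ^ 2)) = 0 :=
    (ZMod.natCast_eq_zero_iff _ _).2 (sq d ▸ mul_dvd_mul hx (dvd_add hx hn))
  push_cast [Nat.cast_sub (hs i hi).1] at hsq ⊢
  linear_combination hsq

theorem choose_mul_modEq {p k a N : ℕ} (hp : p.Prime) (hk : 0 < k) (hN : 0 < N)
    (ha : p ^ a ∣ p * k) (hpk : p ≠ 2 ∨ 2 ∣ k) :
    (p * k * N - 1).choose (p * k - 1) ≡ (k * N - 1).choose (k - 1) [MOD (p ^ a) ^ 2] := by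
  have hc : p * k ∣ p * (k * (N - 1)) := mul_dvd_mul_left p (dvd_mul_right k _)
  have hid := congrArg (Nat.cast : ℕ → ZMod ((p ^ a) ^ 2))
    (choose_mul_prod_nonMultiples hp.pos hk hN)
  have hreflect : ∏ i ∈ nonMultiples p (p * k), ((p * (k * (N - 1)) + i : ℕ) : ZMod ((p ^ a) ^ 2)) =
      ∏ i ∈ nonMultiples p (p * k), (i : ZMod ((p ^ a) ^ 2)) := by
    refine prod_add_eq_prod_of_reflect ha (ha.trans hc) _ fun i hi => ⟨?_, ?_, ?_⟩
    · exact (mem_Ico.1 (mem_filter.1 hi).1).2.le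
    · exact sub_mem_nonMultiples hi (dvd_mul_right p k)
    · exact sub_ne_self_of_mem_nonMultiples hp hpk hi
  have hunit : IsUnit (∏ i ∈ nonMultiples p (p * k), (i : ZMod ((p ^ a) ^ 2))) := by
    rw [← pow_mul, IsUnit.prod_iff]
    exact fun i hi => isUnit_of_mem_nonMultiples hp hi _
  rw [← ZMod.natCast_eq_natCast_iff]
  simp only [Nat.cast_mul, Nat.cast_prod, hreflect] at hid
  exact hunit.mul_left_injective hid

theorem choose_two_mul_modEq {k N : ℕ} (hk : ¬ 2 ∣ k) (hN : 0 < N) :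
    (2 * k * N - 1).choose (2 * k - 1) ≡ (2 * N - 1) * (k * N - 1).choose (k - 1) [MOD 2 ^ 2] := by
  have hk0 : 0 < k := Nat.pos_of_ne_zero (by rintro rfl; simp at hk)
  have hkF : k ∈ nonMultiples 2 (2 * k) := by simp [nonMultiples]; omega
  have hid := congrArg (Nat.cast : ℕ → ZMod (2 ^ 2))
    (choose_mul_prod_nonMultiples two_pos hk0 hN)
  -- `i ↦ 2k - i` fixes `k`, so the factor `2k(N-1) + k = k(2N-1)` is left unpaired.
  rw [← mul_prod_erase _ _ hkF, ← mul_prod_erase _ (2 * (k * (N - 1)) + ·) hkF] at hid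
  set F := (nonMultiples 2 (2 * k)).erase k
  have hreflect : ∏ i ∈ F, ((2 * (k * (N - 1)) + i : ℕ) : ZMod (2 ^ 2)) =
      ∏ i ∈ F, (i : ZMod (2 ^ 2)) := by
    refine prod_add_eq_prod_of_reflect (dvd_mul_right 2 k) (dvd_mul_right 2 _) _ fun i hi => ?_
    obtain ⟨hik, hiF⟩ := mem_erase.1 hi
    have hlt := (mem_Ico.1 (mem_filter.1 hiF).1)
    exact ⟨hlt.2.le, mem_erase.2 ⟨by omega, sub_mem_nonMultiples hiF (dvd_mul_right 2 k)⟩,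
      by omega⟩
  have hfix : 2 * (k * (N - 1)) + k = k * (2 * N - 1) := by
    obtain ⟨M, rfl⟩ : ∃ M, N = M + 1 := ⟨N - 1, by omega⟩
    rw [show 2 * (M + 1) - 1 = 2 * M + 1 by omega, Nat.add_sub_cancel]
    ring
  have hunit : IsUnit ((k : ZMod (2 ^ 2)) * ∏ i ∈ F, (i : ZMod (2 ^ 2))) :=
    (isUnit_of_mem_nonMultiples Nat.prime_two hkF 2).mul
      (IsUnit.prod_iff.2 fun i hi =>
        isUnit_of_mem_nonMultiples Nat.prime_two (mem_of_mem_erase hi) 2)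
  rw [← ZMod.natCast_eq_natCast_iff, Nat.cast_mul]
  simp only [Nat.cast_mul, Nat.cast_prod, hreflect, hfix] at hid
  apply hunit.mul_left_injective
  linear_combination hid

theorem Int.two_mul_sub_one_modEq_neg_one_pow (N : ℕ) :
    (2 * N - 1 : ℤ) ≡ (-1) ^ (N + 1) [ZMOD 2 ^ 2] := by
  obtain ⟨j, rfl | rfl⟩ := Nat.even_or_odd' N
  · exact Int.modEq_iff_dvd.2 ⟨-j, by rw [pow_succ, pow_mul]; push_cast; ring⟩
  · exact Int.modEq_iff_dvd.2 ⟨-j, by rw [pow_succ, pow_succ, pow_mul]; push_cast; ring⟩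

def signedChoose (n k : ℕ) : ℤ := (-1) ^ (k * n) * ((k * (n - 1) - 1).choose (k - 1) : ℤ)

theorem signedChoose_prime_mul_sub_dvd {p k n : ℕ} (hp : p.Prime) (hk : 0 < k) (hn : 2 ≤ n) :
    (p : ℤ) ^ (2 * (p * k).factorization p) ∣ signedChoose n (p * k) - signedChoose n k := by
  have hN : 0 < n - 1 := by omega
  unfold signedChoose
  by_cases hpk : p ≠ 2 ∨ 2 ∣ k
  · have hsign : (-1 : ℤ) ^ (p * k * n) = (-1) ^ (k * n) := by
      rcases hpk with hp2 | ⟨j, rfl⟩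
      · rw [mul_assoc, pow_mul, (hp.odd_of_ne_two hp2).neg_one_pow]
      · rw [Even.neg_one_pow, Even.neg_one_pow] <;> simp [Nat.even_mul]
    have hmod := Nat.modEq_iff_dvd.1 (choose_mul_modEq hp hk hN (Nat.ordProj_dvd (p * k) p) hpk)
    push_cast [← pow_mul, mul_comm _ 2] at hmod
    rw [hsign, ← mul_sub]
    exact dvd_mul_of_dvd_right (dvd_sub_comm.1 hmod) _
  · obtain ⟨rfl, hk2⟩ : p = 2 ∧ ¬ 2 ∣ k := by tauto
    have hv : (2 * k).factorization 2 = 1 := by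
      rw [Nat.factorization_mul two_ne_zero (by omega), Finsupp.add_apply,
        Nat.prime_two.factorization_self, Nat.factorization_eq_zero_of_not_dvd hk2]
    have hmod := Int.natCast_modEq_iff.2 (choose_two_mul_modEq hk2 hN)
    have hfactor := Int.two_mul_sub_one_modEq_neg_one_pow (n - 1)
    rw [Nat.sub_add_cancel (by omega : 1 ≤ n)] at hfactor
    have hsign₁ : (-1 : ℤ) ^ (2 * k * n) = 1 := ((even_two_mul k).mul_right n).neg_one_pow
    have hsign₂ : (-1 : ℤ) ^ (k * n) = (-1) ^ n := by
      rw [pow_mul, (Nat.odd_iff.2 (by omega)).neg_one_pow]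
    rw [hv, hsign₁, hsign₂, one_mul, ← Int.modEq_iff_dvd]
    push_cast [Nat.cast_sub (by omega : 1 ≤ 2 * (n - 1))] at hmod
    exact (hfactor.mul_right _).symm.trans hmod.symm

open ArithmeticFunction
open scoped ArithmeticFunction.Moebius

theorem sum_divisors_moebius_eq_sum_not_dvd (f : ℕ → ℤ) {q m : ℕ} (hq : q.Prime) (hqm : q ∣ m) :
    ∑ d ∈ m.divisors, μ d * f (m / d) =
      ∑ e ∈ (m / q).divisors with ¬ q ∣ e, μ e * (f (m / e) - f (m / (q * e))) := by
  obtain ⟨m, rfl⟩ := hqm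
  rw [Nat.mul_div_cancel_left _ hq.pos]
  rcases eq_or_ne m 0 with rfl | hm
  · simp
  have hnot : (q * m).divisors.filter (¬ q ∣ ·) = m.divisors.filter (¬ q ∣ ·) := by
    ext d
    simp only [mem_filter, Nat.mem_divisors, and_congr_left_iff]
    intro hqd
    have hcop : d.Coprime q := Nat.coprime_comm.1 (hq.coprime_iff_not_dvd.2 hqd)
    simp [hm, hq.ne_zero, hcop.dvd_mul_left]
  have hdvd : (q * m).divisors.filter (q ∣ ·) =
      m.divisors.map ⟨(q * ·), mul_right_injective₀ hq.ne_zero⟩ := by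
    ext d
    simp only [mem_filter, Nat.mem_divisors, mem_map, Function.Embedding.coeFn_mk]
    constructor
    · rintro ⟨⟨hd, -⟩, e, rfl⟩
      exact ⟨e, ⟨Nat.dvd_of_mul_dvd_mul_left hq.pos hd, hm⟩, rfl⟩
    · rintro ⟨e, ⟨he, -⟩, rfl⟩
      exact ⟨⟨mul_dvd_mul_left q he, mul_ne_zero hq.ne_zero hm⟩, e, rfl⟩
  have hsq : ∀ e ∈ m.divisors, μ (q * e) * f (q * m / (q * e)) ≠ 0 → ¬ q ∣ e := by
    rintro e - h ⟨c, rfl⟩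
    have hnsf : ¬ Squarefree (q * (q * c)) := fun hsf => hq.prime.not_isUnit (hsf q ⟨c, by ring⟩)
    simp [moebius_eq_zero_of_not_squarefree hnsf] at h
  rw [← sum_filter_not_add_sum_filter _ (q ∣ ·), hnot, hdvd, sum_map]
  simp only [Function.Embedding.coeFn_mk]
  rw [← sum_filter_of_ne hsq, ← sum_add_distrib]
  refine sum_congr rfl fun e he => ?_
  rw [isMultiplicative_moebius.map_mul_of_coprime
    (hq.coprime_iff_not_dvd.2 (mem_filter.1 he).2), moebius_apply_prime hq]
  ring

theorem Int.natCast_pow_dvd_of_forall_prime {m r : ℕ} {S : ℤ} (hm : m ≠ 0)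
    (h : ∀ q, q.Prime → q ∣ m → (q : ℤ) ^ (r * m.factorization q) ∣ S) : (m : ℤ) ^ r ∣ S := by
  rcases eq_or_ne S 0 with rfl | hS
  · exact dvd_zero _
  rw [← Nat.cast_pow, Int.natCast_dvd, ← Nat.factorization_prime_le_iff_dvd (pow_ne_zero r hm)
    (Int.natAbs_ne_zero.2 hS)]
  intro q hq
  rw [Nat.factorization_pow, Finsupp.smul_apply, smul_eq_mul]
  by_cases hqm : q ∣ m
  · have hdvd := h q hq hqm
    rw [← Nat.cast_pow, Int.natCast_dvd] at hdvd
    exact (hq.pow_dvd_iff_le_factorization (Int.natAbs_ne_zero.2 hS)).1 hdvd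
  · simp [Nat.factorization_eq_zero_of_not_dvd hqm]

theorem pow_dvd_sum_divisors_moebius (f : ℕ → ℤ) (r : ℕ)
    (hf : ∀ p k : ℕ, p.Prime → 0 < k → (p : ℤ) ^ (r * (p * k).factorization p) ∣ f (p * k) - f k)
    {m : ℕ} (hm : m ≠ 0) : (m : ℤ) ^ r ∣ ∑ d ∈ m.divisors, μ d * f (m / d) := by
  refine Int.natCast_pow_dvd_of_forall_prime hm fun q hq hqm => ?_
  rw [sum_divisors_moebius_eq_sum_not_dvd f hq hqm]
  refine dvd_sum fun e he => dvd_mul_of_dvd_right ?_ _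
  obtain ⟨he, hqe⟩ := mem_filter.1 he
  obtain ⟨c, hc⟩ := Nat.dvd_of_mem_divisors he
  have hme : m = e * (q * c) := by
    rw [mul_left_comm, ← hc, Nat.mul_div_cancel' hqm]
  have he0 : 0 < e := Nat.pos_of_mem_divisors he
  have hc0 : 0 < c := Nat.pos_of_ne_zero (by rintro rfl; simp [hme] at hm)
  have hv : (q * c).factorization q = m.factorization q := by
    rw [hme, Nat.factorization_mul he0.ne' (mul_ne_zero hq.ne_zero hc0.ne'), Finsupp.add_apply,
      Nat.factorization_eq_zero_of_not_dvd hqe, zero_add]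
  have hdiv₁ : m / e = q * c := by rw [hme, Nat.mul_div_cancel_left _ he0]
  have hdiv₂ : m / (q * e) = c := by
    rw [hme, mul_left_comm, ← mul_assoc, Nat.mul_div_cancel_left _ (Nat.mul_pos hq.pos he0)]
  have := hf q c hq hc0
  rwa [hv, ← hdiv₁, ← hdiv₂] at this

theorem moebius_eq_neg_one_pow_omegaN {n : ℕ} (h : Squarefree n) : μ n = (-1) ^ omegaN n := by
  rw [moebius_apply_of_squarefree h,
    ← (cardDistinctFactors_eq_cardFactors_iff_squarefree h.ne_zero).2 h, cardDistinctFactors_apply,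
    omegaN, Nat.primeFactors, List.card_toFinset]

theorem sum_Iset_eq_sum_divisors_moebius (f : ℕ → ℤ) (m : ℕ) :
    ∑ k ∈ Iset m, (-1) ^ omegaN (m / k) * f k = ∑ d ∈ m.divisors, μ d * f (m / d) := by
  rcases eq_or_ne m 0 with rfl | hm
  · simp [Iset]
  rw [Iset, sum_filter, ← Nat.sum_div_divisors m]
  refine sum_congr rfl fun d hd => ?_
  rw [Nat.div_div_self (Nat.dvd_of_mem_divisors hd) hm]
  split_ifs with hsf
  · rw [moebius_eq_neg_one_pow_omegaN hsf]
  · rw [moebius_eq_zero_of_not_squarefree hsf, zero_mul]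

/-- `Cmat` computed in `ℤ`: the division is exact by `pow_dvd_sum_divisors_moebius`. -/
def CmatInt (w s t : ℕ) : ℤ :=
  if t ∣ s then
    (-1) ^ (s * w) * ((∑ d ∈ (s / t).divisors, μ d * signedChoose (t * w) (s / t / d)) /
      ((s / t : ℕ) : ℤ) ^ 2)
  else 0

theorem CmatInt_cast {w s : ℕ} (hw : 2 ≤ w) (hs : 0 < s) (t : ℕ) :
    (CmatInt w s t : ℚ) = Cmat w s t := by
  unfold CmatInt Cmat
  split_ifs with hts
  · have hm : s / t ≠ 0 := (Nat.div_pos (Nat.le_of_dvd hs hts) (Nat.pos_of_dvd_of_pos hts hs)).ne'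
    have hn : 2 ≤ t * w := le_mul_of_one_le_of_le (Nat.pos_of_dvd_of_pos hts hs) hw
    have hdvd := pow_dvd_sum_divisors_moebius (signedChoose (t * w)) 2
      (fun p k hp hk => signedChoose_prime_mul_sub_dvd hp hk hn) hm
    rw [Int.cast_mul, Int.cast_div hdvd (by push_cast; exact pow_ne_zero 2 (Nat.cast_ne_zero.2 hm)),
      ← sum_Iset_eq_sum_divisors_moebius, Int.cast_sum]
    have hsum : ∀ k ∈ Iset (s / t), (((-1) ^ omegaN (s / t / k) * signedChoose (t * w) k : ℤ) : ℚ) =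
        (-1) ^ omegaN (s / (k * t)) * (-1) ^ (k * t * w) *
          ((k * (t * w - 1) - 1).choose (k - 1) : ℚ) := fun k _ => by
      rw [signedChoose, Nat.div_div_eq_div_mul, mul_comm t k, mul_assoc k t w]
      push_cast
      ring
    rw [sum_congr rfl hsum]
    simp only [Int.cast_pow, Int.cast_neg, Int.cast_one, Int.cast_natCast]
    ring
  · simp

theorem CmatInt_self (w : ℕ) {s : ℕ} (hs : 0 < s) : CmatInt w s s = 1 := by
  simp [CmatInt, Nat.div_self hs, signedChoose, ← pow_add, ← two_mul]

theorem CmatInt_eq_zero_of_lt (w : ℕ) {s t : ℕ} (hs : 0 < s) (hst : s < t) : CmatInt w s t = 0 :=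
  if_neg fun h => (Nat.le_of_dvd hs h).not_gt hst

theorem Matrix.isUnit_mapMatrix_and_inv_eq_adjugate {n R S : Type*} [Fintype n] [DecidableEq n]
    [CommRing R] [CommRing S] (f : R →+* S) {M : Matrix n n R} (h : M.det = 1) :
    IsUnit (f.mapMatrix M) ∧ (f.mapMatrix M)⁻¹ = f.mapMatrix M.adjugate := by
  have hdet : (f.mapMatrix M).det = 1 := by rw [← RingHom.map_det, h, map_one]
  refine ⟨(Matrix.isUnit_iff_isUnit_det _).2 (hdet ▸ isUnit_one), ?_⟩
  rw [Matrix.inv_def, hdet, Ring.inverse_one, one_smul, RingHom.map_adjugate]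

theorem Cmat_invertible_integral_inverse_general (w : ℕ) (hw : 2 ≤ w) (N : ℕ) :
    IsUnit (Matrix.of fun i j : Fin N => Cmat w ((i : ℕ) + 1) ((j : ℕ) + 1)) ∧
      ∀ i j : Fin N,
        ∃ z : ℤ,
          (Matrix.of fun i j : Fin N => Cmat w ((i : ℕ) + 1) ((j : ℕ) + 1))⁻¹ i j = z := by
  let M : Matrix (Fin N) (Fin N) ℤ := Matrix.of fun i j => CmatInt w (i + 1) (j + 1)
  have hcast : (Matrix.of fun i j : Fin N => Cmat w ((i : ℕ) + 1) ((j : ℕ) + 1)) =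
      (Int.castRingHom ℚ).mapMatrix M := by
    ext i j
    exact (CmatInt_cast hw i.val.succ_pos _).symm
  have hdet : M.det = 1 := by
    rw [Matrix.det_of_isLowerTriangular M fun i j hij =>
      CmatInt_eq_zero_of_lt w i.val.succ_pos (Nat.succ_lt_succ hij)]
    exact prod_eq_one fun i _ => CmatInt_self w i.val.succ_pos
  obtain ⟨hunit, hinv⟩ := Matrix.isUnit_mapMatrix_and_inv_eq_adjugate (Int.castRingHom ℚ) hdet
  rw [hcast, hinv]
  exact ⟨hunit, fun i j => ⟨M.adjugate i j, rfl⟩⟩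

theorem Cmat_invertible_integral_inverse (w : ℕ) (hw : 2 ≤ w) (N : ℕ) (hN : 0 < N) :
    IsUnit (Matrix.of fun i j : Fin N => Cmat w ((i : ℕ) + 1) ((j : ℕ) + 1)) ∧
      ∀ i j : Fin N,
        ∃ z : ℤ,
          (Matrix.of fun i j : Fin N => Cmat w ((i : ℕ) + 1) ((j : ℕ) + 1))⁻¹ i j = z :=
  Cmat_invertible_integral_inverse_general w hw N
end

section
/- Fix an integer w ≥ 2. Let (I_l)_{l ≥ 1}, (n_d)_{d ≥ 1}, (N_l)_{l ≥ 1}, (m_d)_{d ≥ 1} be sequences of rational numbers satisfying: (i) I_l = Σ_{k | l} (1/k³) · n_{l/k} for all l ≥ 1; (ii) N_l = Σ_{k | l} (1/k²) · binom(k((l/k)w−1)−1, k−1) · m_{l/k} for all l ≥ 1; and (iii) N_l = (-1)^{lw+1} · lw · I_l for all l ≥ 1. Then for every positive integer s, Σ_{t | s} C_{st} · m_t = (-1)^{sw+1} · sw · n_s. -/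
open Finset

/-
Put `ε(l) = (-1)^(l w)`. The sum over `I(u)` in `C_{st}` is the Möbius sum
`Σ_{dk = u} μ(d) ⋯`, so after reassociating the triple sum over `d · k · t = s` and using (ii),
`Σ_t C_{st} m_t = ε(s) Σ_{dl = s} μ(d)/d² · ε(l) N_l`. By (iii), `ε(l) N_l = -l w I_l`, and
Möbius inversion of `l³ I_l = Σ_{i ∣ l} i³ n_i`, which is (i), gives `Σ_{dl = s} μ(d)/d³ I_l = n_s`.
-/

open ArithmeticFunction
open scoped ArithmeticFunction.Moebius ArithmeticFunction.omega

theorem omegaN_eq_cardDistinctFactors (n : ℕ) : omegaN n = ω n := by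
  rw [cardDistinctFactors_apply, omegaN, Nat.primeFactors, List.card_toFinset]

theorem sum_Iset_neg_one_pow_omegaN_mul {R : Type*} [CommRing R] (u : ℕ) (f : ℕ → R) :
    ∑ k ∈ Iset u, (-1 : R) ^ omegaN (u / k) * f k = ∑ k ∈ u.divisors, (μ (u / k) : R) * f k := by
  rw [Iset, sum_filter]
  refine sum_congr rfl fun k _ => ?_
  by_cases hsf : Squarefree (u / k)
  · rw [if_pos hsf, moebius_apply_of_squarefree hsf,
      ← (cardDistinctFactors_eq_cardFactors_iff_squarefree hsf.ne_zero).mpr hsf,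
      ← omegaN_eq_cardDistinctFactors]
    push_cast
    rfl
  · rw [if_neg hsf, moebius_eq_zero_of_not_squarefree hsf]
    simp

theorem Nat.sum_divisorsAntidiagonal_assoc {M : Type*} [AddCommMonoid M] (s : ℕ)
    (F : ℕ → ℕ → ℕ → M) :
    ∑ p ∈ s.divisorsAntidiagonal, ∑ q ∈ p.1.divisorsAntidiagonal, F q.1 q.2 p.2 =
      ∑ p ∈ s.divisorsAntidiagonal, ∑ q ∈ p.2.divisorsAntidiagonal, F p.1 q.1 q.2 := by
  simp only [sum_sigma']
  apply sum_nbij' (fun ⟨⟨_, c⟩, ⟨a, b⟩⟩ ↦ ⟨(a, b * c), (b, c)⟩)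
    (fun ⟨⟨a, _⟩, ⟨b, c⟩⟩ ↦ ⟨(a * b, c), (a, b)⟩) <;> aesop (add simp mul_assoc)

theorem Cmat_of_dvd (w : ℕ) {s t : ℕ} (hts : t ∣ s) :
    Cmat w s t = (-1 : ℚ) ^ (s * w) * ∑ p ∈ (s / t).divisorsAntidiagonal,
      (μ p.1 : ℚ) / (p.1 : ℚ) ^ 2 *
        ((-1 : ℚ) ^ (p.2 * t * w) * (Nat.choose (p.2 * (t * w - 1) - 1) (p.2 - 1) : ℚ) /
          (p.2 : ℚ) ^ 2) := by
  have hdiv : ∀ k, s / (k * t) = s / t / k := fun k => by rw [Nat.div_div_eq_div_mul, mul_comm]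
  rw [Nat.sum_divisorsAntidiagonal' fun d k => (μ d : ℚ) / (d : ℚ) ^ 2 *
      ((-1 : ℚ) ^ (k * t * w) * (Nat.choose (k * (t * w - 1) - 1) (k - 1) : ℚ) / (k : ℚ) ^ 2)]
  simp only [Cmat, if_pos hts, hdiv, mul_assoc, sum_Iset_neg_one_pow_omegaN_mul, mul_sum]
  refine sum_congr rfl fun k hk => ?_
  obtain ⟨d, hd⟩ := Nat.dvd_of_mem_divisors hk
  rw [hd, Nat.mul_div_cancel_left d (Nat.pos_of_mem_divisors hk)]
  push_cast
  ring

theorem sum_Cmat_mul_eq (w s : ℕ) (m N : ℕ → ℚ)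
    (hN : ∀ l : ℕ, 0 < l →
      N l = ∑ k ∈ l.divisors,
        (1 / (k : ℚ) ^ 2) * (Nat.choose (k * ((l / k) * w - 1) - 1) (k - 1) : ℚ) * m (l / k)) :
    ∑ t ∈ s.divisors, Cmat w s t * m t = (-1 : ℚ) ^ (s * w) *
      ∑ p ∈ s.divisorsAntidiagonal,
        (μ p.1 : ℚ) / (p.1 : ℚ) ^ 2 * ((-1 : ℚ) ^ (p.2 * w) * N p.2) := by
  set F : ℕ → ℕ → ℕ → ℚ := fun d k t => (μ d : ℚ) / (d : ℚ) ^ 2 *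
    ((-1 : ℚ) ^ (k * t * w) * (Nat.choose (k * (t * w - 1) - 1) (k - 1) : ℚ) / (k : ℚ) ^ 2) * m t
  calc ∑ t ∈ s.divisors, Cmat w s t * m t
      = ∑ p ∈ s.divisorsAntidiagonal, Cmat w s p.2 * m p.2 :=
        (Nat.sum_divisorsAntidiagonal' fun _ t => Cmat w s t * m t).symm
    _ = (-1 : ℚ) ^ (s * w) * ∑ p ∈ s.divisorsAntidiagonal,
          ∑ q ∈ p.1.divisorsAntidiagonal, F q.1 q.2 p.2 := by
        rw [mul_sum]
        refine sum_congr rfl fun p hp => ?_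
        obtain ⟨hst, -⟩ := Nat.mem_divisorsAntidiagonal.mp hp
        have hu : s / p.2 = p.1 := Nat.div_eq_of_eq_mul_left
          (Nat.pos_of_ne_zero (Nat.right_ne_zero_of_mem_divisorsAntidiagonal hp)) hst.symm
        rw [Cmat_of_dvd w (Dvd.intro_left _ hst), hu, mul_assoc, sum_mul]
    _ = (-1 : ℚ) ^ (s * w) * ∑ p ∈ s.divisorsAntidiagonal,
          ∑ q ∈ p.2.divisorsAntidiagonal, F p.1 q.1 q.2 := by
        rw [Nat.sum_divisorsAntidiagonal_assoc]
    _ = _ := by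
        congr 1
        refine sum_congr rfl fun p hp => ?_
        rw [hN p.2 (Nat.pos_of_ne_zero (Nat.right_ne_zero_of_mem_divisorsAntidiagonal hp)),
          ← Nat.sum_divisorsAntidiagonal fun k t => (1 / (k : ℚ) ^ 2) *
            (Nat.choose (k * (t * w - 1) - 1) (k - 1) : ℚ) * m t, mul_sum, mul_sum]
        refine sum_congr rfl fun q hq => ?_
        obtain ⟨hkt, -⟩ := Nat.mem_divisorsAntidiagonal.mp hq
        rw [← hkt]
        simp only [F]
        ring

theorem sum_moebius_div_pow_mul_eq (e : ℕ) (I n : ℕ → ℚ)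
    (h : ∀ l : ℕ, 0 < l → I l = ∑ k ∈ l.divisors, (1 / (k : ℚ) ^ e) * n (l / k))
    {s : ℕ} (hs : 0 < s) :
    ∑ p ∈ s.divisorsAntidiagonal, (μ p.1 : ℚ) / (p.1 : ℚ) ^ e * I p.2 = n s := by
  have hsum : ∀ l : ℕ, 0 < l → ∑ i ∈ l.divisors, (i : ℚ) ^ e * n i = (l : ℚ) ^ e * I l := by
    intro l hl
    rw [h l hl, mul_sum, ← Nat.sum_div_divisors]
    refine sum_congr rfl fun k hk => ?_
    obtain ⟨j, rfl⟩ := Nat.dvd_of_mem_divisors hk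
    have hk0 : (k : ℚ) ≠ 0 := Nat.cast_ne_zero.mpr (Nat.pos_of_mem_divisors hk).ne'
    rw [Nat.mul_div_cancel_left j (Nat.pos_of_mem_divisors hk)]
    push_cast
    field_simp
    ring
  have hinv := (sum_eq_iff_sum_mul_moebius_eq.mp hsum) s hs
  refine mul_left_cancel₀ (pow_ne_zero e (Nat.cast_ne_zero.mpr hs.ne')) ?_
  rw [← hinv, mul_sum]
  refine sum_congr rfl fun p hp => ?_
  obtain ⟨hdl, -⟩ := Nat.mem_divisorsAntidiagonal.mp hp
  have hd0 : (p.1 : ℚ) ≠ 0 :=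
    Nat.cast_ne_zero.mpr (Nat.left_ne_zero_of_mem_divisorsAntidiagonal hp)
  rw [← hdl]
  push_cast
  field_simp
  ring

theorem local_relative_bps_correspondence_general (w : ℕ)
    (I n N m : ℕ → ℚ)
    (h1 : ∀ l : ℕ, 0 < l → I l = ∑ k ∈ l.divisors, (1 / (k : ℚ) ^ 3) * n (l / k))
    (h2 : ∀ l : ℕ, 0 < l →
      N l = ∑ k ∈ l.divisors,
        (1 / (k : ℚ) ^ 2) * (Nat.choose (k * ((l / k) * w - 1) - 1) (k - 1) : ℚ) *
          m (l / k))
    (h3 : ∀ l : ℕ, 0 < l → N l = (-1 : ℚ) ^ (l * w + 1) * ((l * w : ℕ) : ℚ) * I l) :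
    ∀ s : ℕ, 0 < s →
      ∑ t ∈ s.divisors, Cmat w s t * m t =
        (-1 : ℚ) ^ (s * w + 1) * ((s * w : ℕ) : ℚ) * n s := by
  intro s hs
  have hsign : ∀ l : ℕ, 0 < l → (-1 : ℚ) ^ (l * w) * N l = -((l * w : ℕ) : ℚ) * I l := by
    intro l hl
    have hsq : (-1 : ℚ) ^ (l * w) * (-1) ^ (l * w) = 1 := by rw [← mul_pow]; norm_num
    rw [h3 l hl, pow_succ]
    linear_combination (-((l * w : ℕ) : ℚ) * I l) * hsq
  calc ∑ t ∈ s.divisors, Cmat w s t * m t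
      = (-1 : ℚ) ^ (s * w) * ∑ p ∈ s.divisorsAntidiagonal,
          (μ p.1 : ℚ) / (p.1 : ℚ) ^ 2 * ((-1 : ℚ) ^ (p.2 * w) * N p.2) :=
        sum_Cmat_mul_eq w s m N h2
    _ = (-1 : ℚ) ^ (s * w) * (-((s * w : ℕ) : ℚ) *
          ∑ p ∈ s.divisorsAntidiagonal, (μ p.1 : ℚ) / (p.1 : ℚ) ^ 3 * I p.2) := by
        congr 1
        rw [mul_sum]
        refine sum_congr rfl fun p hp => ?_
        obtain ⟨hdl, -⟩ := Nat.mem_divisorsAntidiagonal.mp hp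
        have hd0 : (p.1 : ℚ) ≠ 0 :=
          Nat.cast_ne_zero.mpr (Nat.left_ne_zero_of_mem_divisorsAntidiagonal hp)
        rw [hsign p.2 (Nat.pos_of_ne_zero (Nat.right_ne_zero_of_mem_divisorsAntidiagonal hp)),
          ← hdl]
        push_cast
        field_simp
    _ = (-1 : ℚ) ^ (s * w + 1) * ((s * w : ℕ) : ℚ) * n s := by
        rw [sum_moebius_div_pow_mul_eq 3 I n h1 hs, pow_succ]
        ring

theorem local_relative_bps_correspondence (w : ℕ) (hw : 2 ≤ w)
    (I n N m : ℕ → ℚ)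
    (h1 : ∀ l : ℕ, 0 < l → I l = ∑ k ∈ l.divisors, (1 / (k : ℚ) ^ 3) * n (l / k))
    (h2 : ∀ l : ℕ, 0 < l →
      N l = ∑ k ∈ l.divisors,
        (1 / (k : ℚ) ^ 2) * (Nat.choose (k * ((l / k) * w - 1) - 1) (k - 1) : ℚ) *
          m (l / k))
    (h3 : ∀ l : ℕ, 0 < l → N l = (-1 : ℚ) ^ (l * w + 1) * ((l * w : ℕ) : ℚ) * I l) :
    ∀ s : ℕ, 0 < s →
      ∑ t ∈ s.divisors, Cmat w s t * m t =
        (-1 : ℚ) ^ (s * w + 1) * ((s * w : ℕ) : ℚ) * n s :=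
  local_relative_bps_correspondence_general w I n N m h1 h2 h3
end

section
/- Fix an integer w ≥ 2 and let (a_l)_{l ≥ 1}, (b_d)_{d ≥ 1} be sequences of rational numbers such that a_m = Σ_{k | m} (1/k²) · binom(k((m/k)w−1)−1, k−1) · b_{m/k} for every positive integer m. If a_l is an integer for every l ≥ 1 and b_d is an integer for all d < s, then s² · b_s is an integer. -/
open Finset

theorem relative_bps_denominator_bound (w : ℕ) (hw : 2 ≤ w) (a b : ℕ → ℚ)
    (s : ℕ) (hs : 0 < s)
    (hab : ∀ m : ℕ, 0 < m →
      a m = ∑ k ∈ m.divisors,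
        (1 / (k : ℚ) ^ 2) * (Nat.choose (k * ((m / k) * w - 1) - 1) (k - 1) : ℚ) *
          b (m / k))
    (ha : ∀ l : ℕ, 0 < l → ∃ z : ℤ, a l = z)
    (hb : ∀ d : ℕ, 0 < d → d < s → ∃ z : ℤ, b d = z) :
    ∃ z : ℤ, (s : ℚ) ^ 2 * b s = z := by
  have key := hab s hs
  have h1 : (1:ℕ) ∈ s.divisors := Nat.one_mem_divisors.mpr hs.ne'
  rw [← Finset.add_sum_erase _ _ h1] at key
  have hk1 : (1 / ((1:ℕ) : ℚ) ^ 2) *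
      (Nat.choose (1 * ((s / 1) * w - 1) - 1) (1 - 1) : ℚ) * b (s / 1) = b s := by
    simp
  rw [hk1] at key
  have hbs : b s = a s - ∑ k ∈ s.divisors.erase 1,
      (1 / (k : ℚ) ^ 2) * (Nat.choose (k * ((s / k) * w - 1) - 1) (k - 1) : ℚ) *
        b (s / k) := by linarith
  suffices h : ((s:ℚ)^2 * b s) ∈ (⊥ : Subring ℚ) by
    obtain ⟨z, hz⟩ := Subring.mem_bot.mp h
    exact ⟨z, hz.symm⟩
  rw [hbs, mul_sub, Finset.mul_sum]
  apply sub_mem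
  · obtain ⟨z, hz⟩ := ha s hs
    rw [hz]
    exact mul_mem (pow_mem (natCast_mem _ s) 2) (intCast_mem _ z)
  · apply Subring.sum_mem
    intro k hk
    obtain ⟨hk1', hkd'⟩ := Finset.mem_erase.mp hk
    obtain ⟨hkd, hs0⟩ := Nat.mem_divisors.mp hkd'
    have hk0 : k ≠ 0 := by rintro rfl; exact hs0 (Nat.eq_zero_of_zero_dvd hkd)
    have hklt : 1 < k := lt_of_le_of_ne (Nat.one_le_iff_ne_zero.mpr hk0) (Ne.symm hk1')
    have hlt : s / k < s := Nat.div_lt_self hs hklt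
    have hpos : 0 < s / k := Nat.div_pos (Nat.le_of_dvd hs hkd) (Nat.pos_of_ne_zero hk0)
    obtain ⟨z, hz⟩ := hb (s / k) hpos hlt
    have hsk : (s:ℚ) = (k:ℚ) * ((s / k : ℕ) : ℚ) := by
      exact_mod_cast (Nat.mul_div_cancel' hkd).symm
    have hkQ : (k:ℚ) ≠ 0 := Nat.cast_ne_zero.mpr hk0
    have heq : (s:ℚ)^2 * ((1 / (k : ℚ) ^ 2) *
        (Nat.choose (k * ((s / k) * w - 1) - 1) (k - 1) : ℚ) * b (s / k)) =
        (((s / k : ℕ) : ℚ)^2 * (Nat.choose (k * ((s / k) * w - 1) - 1) (k - 1) : ℚ)) *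
          b (s / k) := by
      rw [hsk]; field_simp
    rw [heq, hz]
    exact mul_mem (mul_mem (pow_mem (natCast_mem _ _) 2)
      (natCast_mem _ _)) (intCast_mem _ z)
end
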